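/- arXiv:1706.06665 — 4 statements merged into one kernel-verified Lean document; each statement's English description precedes it below -/
import Mathlib

section
/- Let y ∈ F_ℤ with y ≠ Θ, let (p,q) ∈ Cyc_ℤ(y), let n < p be an integer, and suppose v = (n,p) y (n,p) ∈ Ψ̂⁻(y, p). Then: (a) every integer i ∉ {n, y(n), p, q} that is a fixed point of I(y) is also a fixed point of I(v); and (b) if j is the minimal visible descent of I(y) and j ≤ q − 1, then every visible descent of I(v) is at least j. -/
open Equiv

noncomputable section

/-- The function underlying the permutation `Θ : i ↦ i - (-1)^i` of `ℤ`. -/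
def thetaFun (i : ℤ) : ℤ := if Even i then i - 1 else i + 1

theorem thetaFun_invol : Function.Involutive thetaFun := by
  intro i
  unfold thetaFun
  by_cases h : Even i
  · have h1 : ¬ Even (i - 1) := by simp [Int.even_sub_one, h]
    simp [h, h1]
  · have h1 : Even (i + 1) := Int.even_add_one.mpr h
    simp [h, h1]

/-- The permutation `Θ` of `ℤ`, interchanging `2k-1` and `2k` for every integer `k`. -/
def Theta : Equiv.Perm ℤ := thetaFun_invol.toPerm

/-- `F_ℤ`: the fixed-point-free involutions of `ℤ` agreeing with `Θ` outside a finite set. -/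
def FZ : Set (Equiv.Perm ℤ) :=
  {z | z * z = 1 ∧ (∀ i : ℤ, z i ≠ i) ∧ {i : ℤ | z i ≠ Theta i}.Finite}

/-- The set of inversions `Inv(w) = {(i,j) : i < j, w(i) > w(j)}`. -/
def InvSet (w : Equiv.Perm ℤ) : Set (ℤ × ℤ) := {p | p.1 < p.2 ∧ w p.2 < w p.1}

/-- `Cyc_ℤ(w) = {(i,j) : i < j, w(i) = j}`. -/
def CycSet (w : Equiv.Perm ℤ) : Set (ℤ × ℤ) := {p | p.1 < p.2 ∧ w p.1 = p.2}

/-- `ℓ̂_FPF(w) = |Inv(w) ∖ Cyc_ℤ(w)| / 2`. -/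
def fpfLen (w : Equiv.Perm ℤ) : ℕ := ((InvSet w) \ (CycSet w)).ncard / 2

/-- `(i,j)` is an FPF-visible inversion of `z`: `i < j` and `z(j) < min{i, z(i)}`. -/
def FpfVisInv (z : Equiv.Perm ℤ) (i j : ℤ) : Prop := i < j ∧ z j < min i (z i)

/-- `i` is an FPF-visible descent of `z`. -/
def FpfVisDes (z : Equiv.Perm ℤ) (i : ℤ) : Prop := FpfVisInv z i (i + 1)

/-- `i` is a visible descent of an involution `f` of `ℤ`: `f(i+1) ≤ min{i, f(i)}`. -/
def VisDes (f : ℤ → ℤ) (i : ℤ) : Prop := f (i + 1) ≤ min i (f i)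

/-- `(q,r)` is the lexicographically maximal FPF-visible inversion of `z`. -/
def IsMaxVisInv (z : Equiv.Perm ℤ) (q r : ℤ) : Prop :=
  FpfVisInv z q r ∧ ∀ a b : ℤ, FpfVisInv z a b → a < q ∨ (a = q ∧ b ≤ r)

/-- `Ψ̂⁺(y, r) = {z ∈ F_ℤ : ℓ̂_FPF(z) = ℓ̂_FPF(y) + 1 and z = (r,j) y (r,j) for some j > r}`. -/
def PsiPlus (y : Equiv.Perm ℤ) (r : ℤ) : Set (Equiv.Perm ℤ) :=
  {z | z ∈ FZ ∧ fpfLen z = fpfLen y + 1 ∧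
    ∃ j : ℤ, r < j ∧ z = Equiv.swap r j * y * Equiv.swap r j}

/-- `Ψ̂⁻(y, r) = {z ∈ F_ℤ : ℓ̂_FPF(z) = ℓ̂_FPF(y) + 1 and z = (i,r) y (i,r) for some i < r}`. -/
def PsiMinus (y : Equiv.Perm ℤ) (r : ℤ) : Set (Equiv.Perm ℤ) :=
  {z | z ∈ FZ ∧ fpfLen z = fpfLen y + 1 ∧
    ∃ i : ℤ, i < r ∧ z = Equiv.swap i r * y * Equiv.swap i r}

open Classical in
/-- The involution `I(z)` of `ℤ` (as a function): its nontrivial cycles are exactly the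
pairs `(p,q) ∈ Cyc_ℤ(z)` for which there exists `(a,b) ∈ Cyc_ℤ(z)` with `p < b < q`. -/
def Imap (z : Equiv.Perm ℤ) (i : ℤ) : ℤ :=
  if ∃ a b : ℤ, a < b ∧ z a = b ∧ min i (z i) < b ∧ b < max i (z i) then z i else i

section Infra

private lemma invol_apply {z : Equiv.Perm ℤ} (h : z * z = 1) (i : ℤ) : z (z i) = i := by
  have := congrArg (fun w : Equiv.Perm ℤ => w i) h
  simpa [Equiv.Perm.mul_apply] using this

private lemma theta_bounds (i : ℤ) : thetaFun i = i - 1 ∨ thetaFun i = i + 1 := by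
  unfold thetaFun; split_ifs <;> simp

private lemma Theta_apply (i : ℤ) : Theta i = thetaFun i := rfl

/-- visible inversions -/
private def VIs (z : Equiv.Perm ℤ) : Set (ℤ × ℤ) :=
  {w | w.1 < w.2 ∧ z w.2 < w.1 ∧ z w.2 < z w.1}

private lemma mem_VIs {z : Equiv.Perm ℤ} {i j : ℤ} :
    (i, j) ∈ VIs z ↔ i < j ∧ z j < i ∧ z j < z i := Iff.rfl

private lemma diff_finite {z : Equiv.Perm ℤ} (hz : z ∈ FZ) : (InvSet z \ CycSet z).Finite := by
  obtain ⟨hinv, hfpf, hfin⟩ := hz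
  have hzz := invol_apply hinv
  have hB : ({i : ℤ | z i ≠ Theta i} ∪ z '' {i : ℤ | z i ≠ Theta i}).Finite :=
    hfin.union (hfin.image z)
  obtain ⟨hi, hhi⟩ := hB.bddAbove
  obtain ⟨lo, hlo⟩ := hB.bddBelow
  apply Set.Finite.subset ((Set.finite_Icc (lo-1) (hi+1)).prod (Set.finite_Icc (lo-1) (hi+1)))
  rintro ⟨i, j⟩ ⟨⟨hij, hinvp⟩, hcyc⟩
  simp only [InvSet, Set.mem_setOf_eq] at hij hinvp
  have hne : z i ≠ j := by
    intro h; exact hcyc ⟨hij, h⟩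
  have hmem : i ∈ {i : ℤ | z i ≠ Theta i} ∨ j ∈ {i : ℤ | z i ≠ Theta i} := by
    by_contra h
    push_neg at h
    simp only [Set.mem_setOf_eq, not_not] at h
    have h1 : z i = thetaFun i := h.1
    have h2 : z j = thetaFun j := h.2
    rcases theta_bounds i with hti | hti <;> rcases theta_bounds j with htj | htj <;>
      rw [hti] at h1 <;> rw [htj] at h2 <;> omega
  have hiz : ∀ x ∈ ({i : ℤ | z i ≠ Theta i} ∪ z '' {i : ℤ | z i ≠ Theta i}), lo ≤ x ∧ x ≤ hi :=
    fun x hx => ⟨hlo hx, hhi hx⟩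
  constructor <;> simp only [Set.mem_Icc]
  · -- bounds for i
    rcases hmem with hiE | hjE
    · have h1 := hiz i (Set.mem_union_left _ hiE)
      omega
    · have h1 := hiz j (Set.mem_union_left _ hjE)
      have h2 := hiz (z j) (Set.mem_union_right _ ⟨j, hjE, rfl⟩)
      by_cases hiE : z i = Theta i
      · rcases theta_bounds i with hti | hti <;> rw [Theta_apply, hti] at hiE <;> omega
      · have h3 := hiz i (Set.mem_union_left _ hiE)
        omega
  · -- bounds for j
    rcases hmem with hiE | hjE
    · have h1 := hiz i (Set.mem_union_left _ hiE)
      have h2 := hiz (z i) (Set.mem_union_right _ ⟨i, hiE, rfl⟩)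
      by_cases hjE : z j = Theta j
      · rcases theta_bounds j with htj | htj <;> rw [Theta_apply, htj] at hjE <;> omega
      · have h3 := hiz j (Set.mem_union_left _ hjE)
        omega
    · have h1 := hiz j (Set.mem_union_left _ hjE)
      omega

private lemma fpfLen_eq_VIs {z : Equiv.Perm ℤ} (hz : z ∈ FZ) :
    (VIs z).Finite ∧ fpfLen z = (VIs z).ncard := by
  have hzz := invol_apply hz.1
  have hDfin := diff_finite hz
  have hinj : ∀ a b : ℤ, z a = z b → a = b := fun a b h => by
    rw [← hzz a, h, hzz]
  have hVID : VIs z ⊆ InvSet z \ CycSet z := by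
    rintro ⟨i, j⟩ ⟨hij, h1, h2⟩
    dsimp only at hij h1 h2
    refine ⟨⟨hij, h2⟩, ?_⟩
    rintro ⟨-, hc⟩
    dsimp only at hc
    rw [← hc, hzz] at h1
    exact absurd h1 (lt_irrefl _)
  have hVfin := hDfin.subset hVID
  set S : ℤ × ℤ → ℤ × ℤ := fun w => (z w.2, z w.1) with hS
  have himg : S '' VIs z ⊆ InvSet z \ CycSet z := by
    rintro ⟨a, b⟩ ⟨⟨i, j⟩, ⟨hij, h1, h2⟩, heq⟩
    dsimp only at hij h1 h2
    simp only [hS, Prod.mk.injEq] at heq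
    obtain ⟨ha, hb⟩ := heq
    subst ha; subst hb
    refine ⟨⟨h2, by rw [hzz, hzz]; exact hij⟩, ?_⟩
    rintro ⟨-, hc⟩
    dsimp only at hc
    rw [hzz] at hc
    have : z j = i := by rw [hc, hzz]
    omega
  have hcover : InvSet z \ CycSet z ⊆ VIs z ∪ S '' VIs z := by
    rintro ⟨i, j⟩ ⟨⟨hij, hinvp⟩, hcyc⟩
    simp only [InvSet, Set.mem_setOf_eq] at hinvp
    have hne : z i ≠ j := fun h => hcyc ⟨hij, h⟩
    by_cases hzj : z j < i
    · exact Or.inl ⟨hij, hzj, hinvp⟩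
    · right
      have hzji : z j ≠ i := by
        intro h
        apply hne
        rw [← h, hzz]
      refine ⟨(z j, z i), ⟨hinvp, by rw [hzz]; omega, by rw [hzz, hzz]; exact hij⟩, ?_⟩
      simp only [hS, Prod.mk.injEq]
      exact ⟨hzz i, hzz j⟩
  have hdisj : Disjoint (VIs z) (S '' VIs z) := by
    rw [Set.disjoint_left]
    rintro ⟨a, b⟩ ⟨hab, h1, h2⟩ ⟨⟨i, j⟩, ⟨hij, g1, g2⟩, heq⟩
    dsimp only at hab h1 h2 hij g1 g2
    simp only [hS, Prod.mk.injEq] at heq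
    obtain ⟨ha, hb⟩ := heq
    subst ha; subst hb
    rw [hzz] at h1
    omega
  have heqD : InvSet z \ CycSet z = VIs z ∪ S '' VIs z :=
    Set.Subset.antisymm hcover (Set.union_subset hVID himg)
  have hSinj : Set.InjOn S (VIs z) := by
    rintro ⟨a, b⟩ _ ⟨c, d⟩ _ heq
    simp only [hS, Prod.mk.injEq] at heq
    exact Prod.ext (hinj _ _ heq.2) (hinj _ _ heq.1)
  have hcard : (InvSet z \ CycSet z).ncard = (VIs z).ncard + (VIs z).ncard := by
    rw [heqD, Set.ncard_union_eq hdisj hVfin (hVfin.image S),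
      Set.ncard_image_of_injOn hSinj]
  refine ⟨hVfin, ?_⟩
  unfold fpfLen
  rw [hcard]
  omega

end Infra
section Inject

private lemma card_contra {A B W : Set (ℤ × ℤ)} (hB : B.Finite) (Φ : ℤ × ℤ → ℤ × ℤ)
    (hmap : ∀ w ∈ A, Φ w ∈ B ∧ Φ w ∉ W) (hinj : Set.InjOn Φ A) (hW : W ⊆ B) :
    A.ncard + W.ncard ≤ B.ncard := by
  have himg : Φ '' A ⊆ B \ W := by
    rintro x ⟨w, hw, rfl⟩
    exact ⟨(hmap w hw).1, (hmap w hw).2⟩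
  have h1 : A.ncard = (Φ '' A).ncard := (Set.ncard_image_of_injOn hinj).symm
  have h2 : (Φ '' A).ncard ≤ (B \ W).ncard :=
    Set.ncard_le_ncard himg (hB.subset Set.diff_subset)
  have h3 : (B \ W).ncard = B.ncard - W.ncard := Set.ncard_diff hW (hB.subset hW)
  have h4 : W.ncard ≤ B.ncard := Set.ncard_le_ncard hW hB
  omega

private def PhiA (y : ℤ → ℤ) (n m p q : ℤ) (w : ℤ × ℤ) : ℤ × ℤ :=
  if w.2 = n then (w.1, p)
  else if w.1 = p then
    (if y w.2 < m then w else if y w.2 < n then (n, w.2) else (y w.2, q))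
  else if w.1 = q then (if y w.2 < n then w else (y w.2, p))
  else w

private def PsiA (y : ℤ → ℤ) (n m p q : ℤ) (w : ℤ × ℤ) : ℤ × ℤ :=
  if w.2 = p then (if w.1 < n then (w.1, n) else (q, y w.1))
  else if w.1 = n then (if m < y w.2 then (p, w.2) else w)
  else if w.2 = q then (if w.1 < p then (p, y w.1) else w)
  else w

private lemma caseA_contra (y v : Equiv.Perm ℤ)
    (hyy : ∀ i, y (y i) = i)
    (n m p q i₀ : ℤ)
    (hyn : y n = m) (hym : y m = n) (hyp : y p = q) (hyq : y q = p)
    (hvn : v n = q) (hvq : v q = n) (hvp : v p = m) (hvm : v m = p)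
    (hvo : ∀ i, i ≠ n → i ≠ m → i ≠ p → i ≠ q → v i = y i)
    (hmn : m < n) (hnp : n < p) (hpq : p < q)
    (hbad : n < i₀ ∧ i₀ < p ∧ m < y i₀ ∧ y i₀ < q)
    (hfy : (VIs y).Finite) (hfv : (VIs v).Finite)
    (hcard : (VIs v).ncard = (VIs y).ncard + 1) : False := by
  set W : Set (ℤ × ℤ) := {(n, p), (i₀, p)} with hW
  set Φ := PhiA (⇑y) n m p q with hΦdef
  set Ψ := PsiA (⇑y) n m p q with hΨdef
  have hinjy : ∀ a b : ℤ, y a = y b → a = b := fun a b h => by rw [← hyy a, h, hyy]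
  have hmaps : ∀ w ∈ VIs y, ((Φ w ∈ VIs v ∧ Φ w ∉ W) ∧ Ψ (Φ w) = w) := by
    rintro ⟨i, j⟩ hw
    rw [mem_VIs] at hw
    obtain ⟨hij, h1, h2⟩ := hw
    have hnotW : ∀ a b : ℤ, b ≠ p → (a, b) ∉ W := by
      intro a b hbp
      simp only [hW, Set.mem_insert_iff, Set.mem_singleton_iff, Prod.mk.injEq, not_or]
      exact ⟨fun h => absurd h.2 hbp, fun h => absurd h.2 hbp⟩
    by_cases hjn : j = n
    · -- C1 : (i, n) ↦ (i, p)
      rw [hjn] at hij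
      rw [hjn, hyn] at h1 h2
      have hvi : v i = y i := hvo i (by omega) (by omega) (by omega) (by omega)
      have hΦw : Φ (i, j) = (i, p) := by
        simp only [hΦdef, PhiA]; rw [if_pos hjn]
      rw [hΦw]
      refine ⟨⟨mem_VIs.mpr ⟨by omega, by rw [hvp]; omega, by rw [hvp, hvi]; omega⟩, ?_⟩, ?_⟩
      · simp only [hW, Set.mem_insert_iff, Set.mem_singleton_iff, Prod.mk.injEq, not_or]
        constructor <;> rintro ⟨h, -⟩ <;> omega
      · simp only [hΨdef, PsiA]
        rw [if_pos trivial, if_pos (show i < n by omega), hjn]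
    · by_cases hip : i = p
      · rw [hip] at hij h1
        rw [hip, hyp] at h2
        have hjq : j ≠ q := fun h => by rw [h, hyq] at h1; omega
        have hjm : j ≠ m := by omega
        have hjp : j ≠ p := by omega
        have hΦ0 : Φ (i, j) =
            (if y j < m then (i, j) else if y j < n then (n, j) else (y j, q)) := by
          simp only [hΦdef, PhiA]
          rw [if_neg hjn, if_pos hip]
        have hvj : v j = y j := hvo j hjn hjm hjp hjq
        by_cases hA : y j < m
        · -- C2 : identity (p, j)
          rw [hΦ0, if_pos hA]
          refine ⟨⟨mem_VIs.mpr ⟨by omega, by rw [hvj]; omega,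
            by rw [hvj, hip, hvp]; omega⟩, hnotW _ _ hjp⟩, ?_⟩
          simp only [hΨdef, PsiA]
          rw [if_neg hjp, if_neg (show ¬ (i = n) by omega), if_neg hjq]
        · by_cases hB : y j < n
          · -- C3 : (p, j) ↦ (n, j)
            have hyjm : y j ≠ m := fun h => hjn (by rw [← hyy j, h, hym])
            rw [hΦ0, if_neg hA, if_pos hB]
            refine ⟨⟨mem_VIs.mpr ⟨by omega, by rw [hvj]; omega,
              by rw [hvj, hvn]; omega⟩, hnotW _ _ hjp⟩, ?_⟩
            simp only [hΨdef, PsiA]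
            rw [if_pos trivial, if_pos (show m < y j by omega), hip, if_neg hjp]
          · -- C4 : (p, j) ↦ (y j, q)
            have hyjn : y j ≠ n := fun h => hjm (by rw [← hyy j, h, hyn])
            have hyjm : y j ≠ m := by omega
            have hyjp : y j ≠ p := by omega
            have hyjq : y j ≠ q := by omega
            have hvc : v (y j) = j := by
              rw [hvo (y j) hyjn hyjm hyjp hyjq, hyy]
            rw [hΦ0, if_neg hA, if_neg hB]
            refine ⟨⟨mem_VIs.mpr ⟨by omega, by rw [hvq]; omega,
              by rw [hvq, hvc]; omega⟩, hnotW _ _ (by omega)⟩, ?_⟩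
            simp only [hΨdef, PsiA]
            rw [if_pos trivial, if_pos (show y j < p by omega), hyy, hip,
              if_neg (show ¬ (q = p) by omega), if_neg hyjn]
      · by_cases hiq : i = q
        · rw [hiq] at hij h1
          rw [hiq, hyq] at h2
          have hjn' : j ≠ n := hjn
          have hjm : j ≠ m := by omega
          have hjp : j ≠ p := by omega
          have hjq : j ≠ q := by omega
          have hvj : v j = y j := hvo j hjn hjm hjp hjq
          have hΦ1 : Φ (i, j) = (if y j < n then (i, j) else (y j, p)) := by
            simp only [hΦdef, PhiA]
            rw [if_neg hjn, if_neg hip, if_pos hiq]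
          by_cases hC : y j < n
          · -- C5 : identity (q, j)
            rw [hΦ1, if_pos hC]
            refine ⟨⟨mem_VIs.mpr ⟨by omega, by rw [hvj]; omega,
              by rw [hvj, hiq, hvq]; omega⟩, hnotW _ _ hjp⟩, ?_⟩
            simp only [hΨdef, PsiA]
            rw [if_neg hjp, if_neg (show ¬ (i = n) by omega), if_neg hjq]
          · -- C6 : (q, j) ↦ (y j, p)
            have hyjn : y j ≠ n := fun h => hjm (by rw [← hyy j, h, hyn])
            have hyjm : y j ≠ m := by omega
            have hyjp : y j ≠ p := by omega
            have hyjq : y j ≠ q := by omega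
            have hvc : v (y j) = j := by
              rw [hvo (y j) hyjn hyjm hyjp hyjq, hyy]
            rw [hΦ1, if_neg hC]
            refine ⟨⟨mem_VIs.mpr ⟨by omega, by rw [hvp]; omega,
              by rw [hvp, hvc]; omega⟩, ?_⟩, ?_⟩
            · simp only [hW, Set.mem_insert_iff, Set.mem_singleton_iff, Prod.mk.injEq, not_or]
              constructor
              · rintro ⟨h, -⟩; exact hyjn h
              · rintro ⟨h, -⟩
                have h3 : y i₀ = j := by rw [← h, hyy]
                omega
            · simp only [hΨdef, PsiA]
              rw [if_pos trivial, if_neg (show ¬ (y j < n) by omega), hyy, hiq]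
        · -- identity branches
          have hΦw : Φ (i, j) = (i, j) := by
            simp only [hΦdef, PhiA]
            rw [if_neg hjn, if_neg hip, if_neg hiq]
          rw [hΦw]
          have hjp : j ≠ p := by
            intro h; rw [h] at hij; rw [h, hyp] at h1; omega
          have hjm : j ≠ m := by
            intro h; rw [h] at hij; rw [h, hym] at h1; omega
          by_cases hjq : j = q
          · rw [hjq] at hij
            rw [hjq, hyq] at h1 h2
            have hvi : v i = y i := hvo i (by omega) (by omega) hip hiq
            refine ⟨⟨mem_VIs.mpr ⟨by omega, by rw [hjq, hvq]; omega,
              by rw [hjq, hvq, hvi]; omega⟩, hnotW _ _ hjp⟩, ?_⟩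
            simp only [hΨdef, PsiA]
            rw [if_neg hjp, if_neg (show ¬ (i = n) by omega), if_pos hjq,
              if_neg (show ¬ (i < p) by omega)]
          · have hvj : v j = y j := hvo j hjn hjm hjp hjq
            by_cases hin : i = n
            · rw [hin, hyn] at h2
              rw [hin] at h1
              refine ⟨⟨mem_VIs.mpr ⟨hij, by rw [hvj, hin]; omega,
                by rw [hvj, hin, hvn]; omega⟩, hnotW _ _ hjp⟩, ?_⟩
              simp only [hΨdef, PsiA]
              rw [if_neg hjp, if_pos hin, if_neg (show ¬ (m < y j) by omega)]
            · by_cases him : i = m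
              · rw [him, hym] at h2
                rw [him] at h1
                refine ⟨⟨mem_VIs.mpr ⟨hij, by rw [hvj, him]; omega,
                  by rw [hvj, him, hvm]; omega⟩, hnotW _ _ hjp⟩, ?_⟩
                simp only [hΨdef, PsiA]
                rw [if_neg hjp, if_neg (show ¬ (i = n) by omega), if_neg hjq]
              · have hvi : v i = y i := hvo i hin him hip hiq
                refine ⟨⟨mem_VIs.mpr ⟨hij, by rw [hvj]; omega,
                  by rw [hvj, hvi]; omega⟩, hnotW _ _ hjp⟩, ?_⟩
                simp only [hΨdef, PsiA]
                rw [if_neg hjp, if_neg hin, if_neg hjq]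
  have hinj : Set.InjOn Φ (VIs y) := by
    intro w1 h1 w2 h2 he
    have e1 := (hmaps w1 h1).2
    have e2 := (hmaps w2 h2).2
    rw [← e1, ← e2, he]
  have hi₀S : i₀ ≠ n ∧ i₀ ≠ m ∧ i₀ ≠ p ∧ i₀ ≠ q := by omega
  have hvi₀ : v i₀ = y i₀ := hvo i₀ hi₀S.1 hi₀S.2.1 hi₀S.2.2.1 hi₀S.2.2.2
  have hWsub : W ⊆ VIs v := by
    intro w hw
    simp only [hW, Set.mem_insert_iff, Set.mem_singleton_iff] at hw
    rcases hw with rfl | rfl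
    · exact mem_VIs.mpr ⟨by omega, by rw [hvp]; omega, by rw [hvp, hvn]; omega⟩
    · exact mem_VIs.mpr ⟨by omega, by rw [hvp]; omega, by rw [hvp, hvi₀]; omega⟩
  have hWcard : W.ncard = 2 := by
    rw [hW]
    rw [Set.ncard_pair (by simp only [ne_eq, Prod.mk.injEq, not_and]; intro h; omega)]
  have := card_contra hfv Φ (fun w hw => (hmaps w hw).1) hinj hWsub
  omega

end Inject
section InjectC

private def PhiC (y : ℤ → ℤ) (n m p q : ℤ) (w : ℤ × ℤ) : ℤ × ℤ :=
  if w.2 = m then (w.1, q)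
  else if w.1 = p then (if y w.2 < m then w else (y w.2, p))
  else if w.1 = q then
    (if y w.2 < n then w else if y w.2 < m then (m, w.2) else (y w.2, q))
  else w

private def PsiC (y : ℤ → ℤ) (n m p q : ℤ) (w : ℤ × ℤ) : ℤ × ℤ :=
  if w.2 = q then (if w.1 < m then (w.1, m) else if w.1 < p then (q, y w.1) else w)
  else if w.2 = p then (p, y w.1)
  else if w.1 = m then (if y w.2 < n then w else (q, w.2))
  else w

private lemma caseC_contra (y v : Equiv.Perm ℤ)
    (hyy : ∀ i, y (y i) = i)
    (n m p q : ℤ)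
    (hyn : y n = m) (hym : y m = n) (hyp : y p = q) (hyq : y q = p)
    (hvn : v n = q) (hvq : v q = n) (hvp : v p = m) (hvm : v m = p)
    (hvo : ∀ i, i ≠ n → i ≠ m → i ≠ p → i ≠ q → v i = y i)
    (hnm : n < m) (hmp : m < p) (hpq : p < q)
    (hfy : (VIs y).Finite) (hfv : (VIs v).Finite)
    (hcard : (VIs v).ncard = (VIs y).ncard + 1) : False := by
  set W : Set (ℤ × ℤ) := {(m, q), (p, q)} with hW
  set Φ := PhiC (⇑y) n m p q with hΦdef
  set Ψ := PsiC (⇑y) n m p q with hΨdef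
  have hmaps : ∀ w ∈ VIs y, ((Φ w ∈ VIs v ∧ Φ w ∉ W) ∧ Ψ (Φ w) = w) := by
    rintro ⟨i, j⟩ hw
    rw [mem_VIs] at hw
    obtain ⟨hij, h1, h2⟩ := hw
    have hnotW : ∀ a b : ℤ, b ≠ q → (a, b) ∉ W := by
      intro a b hbq
      simp only [hW, Set.mem_insert_iff, Set.mem_singleton_iff, Prod.mk.injEq, not_or]
      exact ⟨fun h => absurd h.2 hbq, fun h => absurd h.2 hbq⟩
    have hnotW2 : ∀ a b : ℤ, a ≠ m → a ≠ p → (a, b) ∉ W := by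
      intro a b h3 h4
      simp only [hW, Set.mem_insert_iff, Set.mem_singleton_iff, Prod.mk.injEq, not_or]
      exact ⟨fun h => absurd h.1 h3, fun h => absurd h.1 h4⟩
    by_cases hjm : j = m
    · -- K1 : (i, m) ↦ (i, q)
      rw [hjm] at hij
      rw [hjm, hym] at h1 h2
      have hvi : v i = y i := hvo i (by omega) (by omega) (by omega) (by omega)
      have hΦw : Φ (i, j) = (i, q) := by
        simp only [hΦdef, PhiC]; rw [if_pos hjm]
      rw [hΦw]
      refine ⟨⟨mem_VIs.mpr ⟨by omega, by rw [hvq]; omega, by rw [hvq, hvi]; omega⟩,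
        hnotW2 _ _ (by omega) (by omega)⟩, ?_⟩
      simp only [hΨdef, PsiC]
      rw [if_pos trivial, if_pos (show i < m by omega), hjm]
    · by_cases hip : i = p
      · rw [hip] at hij h1
        rw [hip, hyp] at h2
        have hjq : j ≠ q := fun h => by rw [h, hyq] at h1; omega
        have hjp : j ≠ p := by omega
        have hjn : j ≠ n := by omega
        have hvj : v j = y j := hvo j hjn hjm hjp hjq
        have hΦ0 : Φ (i, j) = (if y j < m then (i, j) else (y j, p)) := by
          simp only [hΦdef, PhiC]
          rw [if_neg hjm, if_pos hip]
        by_cases hA : y j < m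
        · -- K2 : identity (p, j)
          rw [hΦ0, if_pos hA]
          refine ⟨⟨mem_VIs.mpr ⟨by omega, by rw [hvj, hip]; omega,
            by rw [hvj, hip, hvp]; omega⟩, hnotW _ _ hjq⟩, ?_⟩
          simp only [hΨdef, PsiC]
          rw [if_neg hjq, if_neg hjp, if_neg (show ¬ (i = m) by omega)]
        · -- K3 : (p, j) ↦ (y j, p)
          have hyjm : y j ≠ m := fun h => by
            have h3 : j = n := by rw [← hyy j, h, hym]
            omega
          have hyjn : y j ≠ n := by omega
          have hyjp : y j ≠ p := by omega
          have hyjq : y j ≠ q := by omega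
          have hvc : v (y j) = j := by rw [hvo (y j) hyjn hyjm hyjp hyjq, hyy]
          rw [hΦ0, if_neg hA]
          refine ⟨⟨mem_VIs.mpr ⟨by omega, by rw [hvp]; omega,
            by rw [hvp, hvc]; omega⟩, hnotW _ _ (by omega)⟩, ?_⟩
          simp only [hΨdef, PsiC]
          rw [if_neg (show ¬ (p = q) by omega), if_pos trivial, hyy, hip]
      · by_cases hiq : i = q
        · rw [hiq] at hij h1
          rw [hiq, hyq] at h2
          have hjn : j ≠ n := by omega
          have hjm' : j ≠ m := hjm
          have hjp : j ≠ p := by omega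
          have hjq : j ≠ q := by omega
          have hvj : v j = y j := hvo j hjn hjm hjp hjq
          have hΦ1 : Φ (i, j) =
              (if y j < n then (i, j) else if y j < m then (m, j) else (y j, q)) := by
            simp only [hΦdef, PhiC]
            rw [if_neg hjm, if_neg hip, if_pos hiq]
          by_cases hC : y j < n
          · -- K4 : identity (q, j)
            rw [hΦ1, if_pos hC]
            refine ⟨⟨mem_VIs.mpr ⟨by omega, by rw [hvj, hiq]; omega,
              by rw [hvj, hiq, hvq]; omega⟩, hnotW _ _ hjq⟩, ?_⟩
            simp only [hΨdef, PsiC]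
            rw [if_neg hjq, if_neg hjp, if_neg (show ¬ (i = m) by omega)]
          · by_cases hD : y j < m
            · -- K5 : (q, j) ↦ (m, j)
              have hyjn : y j ≠ n := fun h => by
                have h3 : j = m := by rw [← hyy j, h, hyn]
                omega
              rw [hΦ1, if_neg hC, if_pos hD]
              refine ⟨⟨mem_VIs.mpr ⟨by omega, by rw [hvj]; omega,
                by rw [hvj, hvm]; omega⟩, hnotW _ _ hjq⟩, ?_⟩
              simp only [hΨdef, PsiC]
              rw [if_neg hjq, if_neg hjp, if_pos trivial,
                if_neg (show ¬ (y j < n) by omega), hiq]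
            · -- K6 : (q, j) ↦ (y j, q)
              have hyjm : y j ≠ m := fun h => by
                have h3 : j = n := by rw [← hyy j, h, hym]
                omega
              have hyjn : y j ≠ n := by omega
              have hyjp : y j ≠ p := by omega
              have hyjq : y j ≠ q := by omega
              have hvc : v (y j) = j := by rw [hvo (y j) hyjn hyjm hyjp hyjq, hyy]
              rw [hΦ1, if_neg hC, if_neg hD]
              refine ⟨⟨mem_VIs.mpr ⟨by omega, by rw [hvq]; omega,
                by rw [hvq, hvc]; omega⟩, hnotW2 _ _ (by omega) (by omega)⟩, ?_⟩
              simp only [hΨdef, PsiC]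
              rw [if_pos trivial, if_neg (show ¬ (y j < m) by omega),
                if_pos (show y j < p by omega), hyy, hiq]
        · -- identity branches
          have hΦw : Φ (i, j) = (i, j) := by
            simp only [hΦdef, PhiC]
            rw [if_neg hjm, if_neg hip, if_neg hiq]
          rw [hΦw]
          have hjp : j ≠ p := by
            intro h; rw [h] at hij; rw [h, hyp] at h1; omega
          have hjn : j ≠ n := by
            intro h; rw [h] at hij; rw [h, hyn] at h1; omega
          by_cases hjq : j = q
          · rw [hjq] at hij
            rw [hjq, hyq] at h1 h2
            have hvi : v i = y i := hvo i (by omega) (by omega) hip hiq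
            refine ⟨⟨mem_VIs.mpr ⟨by omega, by rw [hjq, hvq]; omega,
              by rw [hjq, hvq, hvi]; omega⟩, hnotW2 _ _ (by omega) hip⟩, ?_⟩
            simp only [hΨdef, PsiC]
            rw [if_pos hjq, if_neg (show ¬ (i < m) by omega),
              if_neg (show ¬ (i < p) by omega)]
          · have hvj : v j = y j := hvo j hjn hjm hjp hjq
            by_cases hin : i = n
            · rw [hin, hyn] at h2
              rw [hin] at h1
              refine ⟨⟨mem_VIs.mpr ⟨hij, by rw [hvj, hin]; omega,
                by rw [hvj, hin, hvn]; omega⟩, hnotW _ _ hjq⟩, ?_⟩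
              simp only [hΨdef, PsiC]
              rw [if_neg hjq, if_neg hjp, if_neg (show ¬ (i = m) by omega)]
            · by_cases him : i = m
              · rw [him, hym] at h2
                rw [him] at h1
                refine ⟨⟨mem_VIs.mpr ⟨hij, by rw [hvj, him]; omega,
                  by rw [hvj, him, hvm]; omega⟩, hnotW _ _ hjq⟩, ?_⟩
                simp only [hΨdef, PsiC]
                rw [if_neg hjq, if_neg hjp, if_pos him, if_pos (show y j < n by omega)]
              · have hvi : v i = y i := hvo i hin him hip hiq
                refine ⟨⟨mem_VIs.mpr ⟨hij, by rw [hvj]; omega,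
                  by rw [hvj, hvi]; omega⟩, hnotW _ _ hjq⟩, ?_⟩
                simp only [hΨdef, PsiC]
                rw [if_neg hjq, if_neg hjp, if_neg him]
  have hinj : Set.InjOn Φ (VIs y) := by
    intro w1 h1 w2 h2 he
    have e1 := (hmaps w1 h1).2
    have e2 := (hmaps w2 h2).2
    rw [← e1, ← e2, he]
  have hWsub : W ⊆ VIs v := by
    intro w hw
    simp only [hW, Set.mem_insert_iff, Set.mem_singleton_iff] at hw
    rcases hw with rfl | rfl
    · exact mem_VIs.mpr ⟨by omega, by rw [hvq]; omega, by rw [hvq, hvm]; omega⟩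
    · exact mem_VIs.mpr ⟨by omega, by rw [hvq]; omega, by rw [hvq, hvp]; omega⟩
  have hWcard : W.ncard = 2 := by
    rw [hW]
    rw [Set.ncard_pair (by simp only [ne_eq, Prod.mk.injEq, not_and]; intro h; omega)]
  have := card_contra hfv Φ (fun w hw => (hmaps w hw).1) hinj hWsub
  omega

end InjectC
section InjectD

private def PhiD (y : ℤ → ℤ) (n m p q : ℤ) (w : ℤ × ℤ) : ℤ × ℤ :=
  if w.2 = q then
    (if w.1 = p then (p, m) else if p < w.1 ∧ p < y w.1 then w else (w.1, m))
  else if w.1 = m then (if y w.2 < n then w else (q, w.2))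
  else w

private def PsiD (y : ℤ → ℤ) (n m p q : ℤ) (w : ℤ × ℤ) : ℤ × ℤ :=
  if w.2 = m then
    (if w.1 = p then (p, q) else if p < w.1 ∧ p < y w.1 then w else (w.1, q))
  else if w.1 = q then (if y w.2 < n then w else (m, w.2))
  else w

private lemma caseD_contra (y v : Equiv.Perm ℤ)
    (hyy : ∀ i, y (y i) = i)
    (n m p q : ℤ)
    (hyn : y n = m) (hym : y m = n) (hyp : y p = q) (hyq : y q = p)
    (hvn : v n = q) (hvq : v q = n) (hvp : v p = m) (hvm : v m = p)
    (hvo : ∀ i, i ≠ n → i ≠ m → i ≠ p → i ≠ q → v i = y i)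
    (hnp : n < p) (hpq : p < q) (hqm : q < m)
    (hfy : (VIs y).Finite) (hfv : (VIs v).Finite)
    (hcard : (VIs v).ncard = (VIs y).ncard + 1) : False := by
  set Φ := PhiD (⇑y) n m p q with hΦdef
  set Ψ := PsiD (⇑y) n m p q with hΨdef
  have hmaps : ∀ w ∈ VIs v, (Φ w ∈ VIs y ∧ Ψ (Φ w) = w) := by
    rintro ⟨i, j⟩ hw
    rw [mem_VIs] at hw
    obtain ⟨hij, h1, h2⟩ := hw
    by_cases hjq : j = q
    · rw [hjq] at hij
      rw [hjq, hvq] at h1 h2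
      by_cases hip : i = p
      · -- D1 : (p, q) ↦ (p, m)
        have hΦw : Φ (i, j) = (p, m) := by
          simp only [hΦdef, PhiD]; rw [if_pos hjq, if_pos hip]
        rw [hΦw]
        refine ⟨mem_VIs.mpr ⟨by omega, by rw [hym]; omega, by rw [hym, hyp]; omega⟩, ?_⟩
        simp only [hΨdef, PsiD]
        rw [if_pos trivial, if_pos trivial, hjq, hip]
      · have hvi : v i = y i := hvo i (by omega) (by omega) hip (by omega)
        rw [hvi] at h2
        by_cases hE : p < i ∧ p < y i
        · -- D2a : identity (i, q)
          have hΦw : Φ (i, j) = (i, j) := by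
            simp only [hΦdef, PhiD]
            rw [if_pos hjq, if_neg hip, if_pos hE]
          rw [hΦw]
          refine ⟨mem_VIs.mpr ⟨by omega, by rw [hjq, hyq]; omega,
            by rw [hjq, hyq]; omega⟩, ?_⟩
          simp only [hΨdef, PsiD]
          rw [if_neg (show ¬ (j = m) by omega), if_neg (show ¬ (i = q) by omega)]
        · -- D2b : (i, q) ↦ (i, m)
          have hΦw : Φ (i, j) = (i, m) := by
            simp only [hΦdef, PhiD]
            rw [if_pos hjq, if_neg hip, if_neg hE]
          rw [hΦw]
          refine ⟨mem_VIs.mpr ⟨by omega, by rw [hym]; omega, by rw [hym]; omega⟩, ?_⟩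
          simp only [hΨdef, PsiD]
          rw [if_pos trivial, if_neg hip, if_neg hE, hjq]
    · by_cases him : i = m
      · rw [him] at hij
        rw [him] at h1
        rw [him, hvm] at h2
        have hjn : j ≠ n := by omega
        have hjm : j ≠ m := by omega
        have hjp : j ≠ p := by omega
        have hvj : v j = y j := hvo j hjn hjm hjp hjq
        rw [hvj] at h1 h2
        by_cases hF : y j < n
        · -- D3a : identity (m, j)
          have hΦw : Φ (i, j) = (i, j) := by
            simp only [hΦdef, PhiD]
            rw [if_neg hjq, if_pos him, if_pos hF]
          rw [hΦw]
          refine ⟨mem_VIs.mpr ⟨by omega, by rw [him]; omega,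
            by rw [him, hym]; omega⟩, ?_⟩
          simp only [hΨdef, PsiD]
          rw [if_neg hjm, if_neg (show ¬ (i = q) by omega)]
        · -- D3b : (m, j) ↦ (q, j)
          have hΦw : Φ (i, j) = (q, j) := by
            simp only [hΦdef, PhiD]
            rw [if_neg hjq, if_pos him, if_neg hF]
          rw [hΦw]
          refine ⟨mem_VIs.mpr ⟨by omega, by omega, by rw [hyq]; omega⟩, ?_⟩
          simp only [hΨdef, PsiD]
          rw [if_neg hjm, if_pos trivial, if_neg hF, him]
      · -- identity branches
        have hΦw : Φ (i, j) = (i, j) := by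
          simp only [hΦdef, PhiD]
          rw [if_neg hjq, if_neg him]
        rw [hΦw]
        have hjn : j ≠ n := by
          intro h; rw [h] at hij; rw [h, hvn] at h1; omega
        have hjp : j ≠ p := by
          intro h; rw [h] at hij; rw [h, hvp] at h1; omega
        by_cases hjm : j = m
        · -- D7 : (i, m) identity
          rw [hjm] at hij
          rw [hjm, hvm] at h1 h2
          have hiq2 : i ≠ q := fun h => by rw [h, hvq] at h2; omega
          have hvi : v i = y i := hvo i (by omega) him (by omega) hiq2
          rw [hvi] at h2
          refine ⟨mem_VIs.mpr ⟨by omega, by rw [hjm, hym]; omega,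
            by rw [hjm, hym]; omega⟩, ?_⟩
          simp only [hΨdef, PsiD]
          rw [if_pos hjm, if_neg (show ¬ (i = p) by omega),
            if_pos (show p < i ∧ p < y i from ⟨by omega, by omega⟩)]
        · have hvj : v j = y j := hvo j hjn hjm hjp hjq
          rw [hvj] at h1 h2
          by_cases hin : i = n
          · -- D4
            rw [hin] at h1
            refine ⟨mem_VIs.mpr ⟨hij, by rw [hin]; omega,
              by rw [hin, hyn]; omega⟩, ?_⟩
            simp only [hΨdef, PsiD]
            rw [if_neg hjm, if_neg (show ¬ (i = q) by omega)]
          · by_cases hiq2 : i = q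
            · -- D5
              rw [hiq2] at h1
              rw [hiq2, hvq] at h2
              refine ⟨mem_VIs.mpr ⟨hij, by rw [hiq2]; omega,
                by rw [hiq2, hyq]; omega⟩, ?_⟩
              simp only [hΨdef, PsiD]
              rw [if_neg hjm, if_pos hiq2, if_pos (show y j < n by omega)]
            · by_cases hip : i = p
              · -- D6
                rw [hip] at h1
                refine ⟨mem_VIs.mpr ⟨hij, by rw [hip]; omega,
                  by rw [hip, hyp]; omega⟩, ?_⟩
                simp only [hΨdef, PsiD]
                rw [if_neg hjm, if_neg (show ¬ (i = q) by omega)]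
              · -- D8
                have hvi : v i = y i := hvo i hin him hip hiq2
                rw [hvi] at h2
                refine ⟨mem_VIs.mpr ⟨hij, h1, h2⟩, ?_⟩
                simp only [hΨdef, PsiD]
                rw [if_neg hjm, if_neg hiq2]
  have hinj : Set.InjOn Φ (VIs v) := by
    intro w1 h1 w2 h2 he
    have e1 := (hmaps w1 h1).2
    have e2 := (hmaps w2 h2).2
    rw [← e1, ← e2, he]
  have := card_contra hfy Φ
    (fun w hw => ⟨(hmaps w hw).1, Set.notMem_empty _⟩) hinj (Set.empty_subset _)
  rw [Set.ncard_empty] at this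
  omega

end InjectD

/-- let `y ∈ F_ℤ - {Θ}`, `(p,q) ∈ Cyc_ℤ(y)`, `n < p`, and suppose
`v = (n,p) y (n,p) ∈ Ψ̂⁻(y, p)`. Then (a) every fixed point of `I(y)` outside
`{n, y(n), p, q}` is a fixed point of `I(v)`; and (b) if `j` is the minimal visible
descent of `I(y)` and `j ≤ q - 1`, then every visible descent of `I(v)` is at least `j`. -/
theorem Imap_fixed_and_min_visDes (y : Equiv.Perm ℤ) (hy : y ∈ FZ) (hyT : y ≠ Theta)
    (p q n : ℤ) (hpq : p < q ∧ y p = q) (hn : n < p)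
    (v : Equiv.Perm ℤ) (hv : v = Equiv.swap n p * y * Equiv.swap n p)
    (hvP : v ∈ PsiMinus y p) :
    (∀ i : ℤ, i ≠ n → i ≠ y n → i ≠ p → i ≠ q → Imap y i = i → Imap v i = i) ∧
    (∀ j : ℤ, IsLeast {d : ℤ | VisDes (Imap y) d} j → j ≤ q - 1 →
      ∀ d : ℤ, VisDes (Imap v) d → j ≤ d) := by
  obtain ⟨hpq1, hyp⟩ := hpq
  obtain ⟨hv1, hlen, -⟩ := hvP
  have hyy : ∀ i, y (y i) = i := invol_apply hy.1
  have hvv : ∀ i, v (v i) = i := invol_apply hv1.1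
  have hyf : ∀ i, y i ≠ i := hy.2.1
  set m := y n with hm
  have hyn : y n = m := rfl
  have hym : y m = n := hyy n
  have hyq : y q = p := by rw [← hyp, hyy]
  have hmn' : m ≠ n := by rw [hm]; exact hyf n
  have hmp : m ≠ p := by
    intro h
    have h2 : n = q := by rw [← hym, h, hyp]
    omega
  have hmq : m ≠ q := by
    intro h
    have h2 : n = p := by rw [← hym, h, hyq]
    omega
  have hvap : ∀ i, v i = (Equiv.swap n p) (y ((Equiv.swap n p) i)) := by
    intro i; rw [hv]; simp [Equiv.Perm.mul_apply]
  have hvn : v n = q := by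
    rw [hvap, Equiv.swap_apply_left, hyp,
      Equiv.swap_apply_of_ne_of_ne (show q ≠ n by omega) (show q ≠ p by omega)]
  have hvp : v p = m := by
    rw [hvap, Equiv.swap_apply_right, hyn, Equiv.swap_apply_of_ne_of_ne hmn' hmp]
  have hvm : v m = p := by
    rw [hvap, Equiv.swap_apply_of_ne_of_ne hmn' hmp, hym, Equiv.swap_apply_left]
  have hvq : v q = n := by
    rw [hvap, Equiv.swap_apply_of_ne_of_ne (show q ≠ n by omega) (show q ≠ p by omega),
      hyq, Equiv.swap_apply_right]
  have hvo : ∀ i, i ≠ n → i ≠ m → i ≠ p → i ≠ q → v i = y i := by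
    intro i h1 h2 h3 h4
    rw [hvap, Equiv.swap_apply_of_ne_of_ne h1 h3]
    apply Equiv.swap_apply_of_ne_of_ne
    · intro h
      apply h2
      rw [← hyy i, h]
    · intro h
      apply h4
      rw [← hyy i, h]; exact hyp
  obtain ⟨hfy, hcy⟩ := fpfLen_eq_VIs hy
  obtain ⟨hfv, hcv⟩ := fpfLen_eq_VIs hv1
  have hcard : (VIs v).ncard = (VIs y).ncard + 1 := by
    rw [← hcy, ← hcv, hlen]
  have hcases : m < n ∨ (p < m ∧ m < q) := by
    by_contra hcon
    push_neg at hcon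
    obtain ⟨hc1, hc2⟩ := hcon
    have h1 : n < m := by omega
    rcases lt_or_gt_of_ne hmp with h | h
    · exact caseC_contra y v hyy n m p q hyn hym hyp hyq hvn hvq hvp hvm hvo
        h1 h hpq1 hfy hfv hcard
    · have h2 : q < m := by
        have := hc2 h
        omega
      exact caseD_contra y v hyy n m p q hyn hym hyp hyq hvn hvq hvp hvm hvo
        hn hpq1 h2 hfy hfv hcard
  have hK : m < n → ∀ i, n < i → i < p → y i < m ∨ q < y i := by
    intro hmn i hni hip
    by_contra hcon
    push_neg at hcon
    have h1 : y i ≠ m := by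
      intro h
      have h3 : i = n := by rw [← hyy i, h]; exact hym
      omega
    have h2 : y i ≠ q := by
      intro h
      have h3 : i = p := by rw [← hyy i, h]; exact hyq
      omega
    exact caseA_contra y v hyy n m p q i hyn hym hyp hyq hvn hvq hvp hvm hvo
      hmn hn hpq1 ⟨hni, hip, by omega, by omega⟩ hfy hfv hcard
  constructor
  · -- part (a)
    intro i hin hiyn hip hiq hIy
    have hyine : y i ≠ n := by
      intro h; apply hiyn; rw [← hyy i, h]
    have hyiq : y i ≠ q := by
      intro h; apply hip; rw [← hyy i, h]; exact hyq
    have hacty : ¬ (∃ a b : ℤ, a < b ∧ y a = b ∧ min i (y i) < b ∧ b < max i (y i)) := by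
      intro hact
      rw [Imap, if_pos hact] at hIy
      exact hyf i hIy
    have hvi : v i = y i := hvo i hin hiyn hip hiq
    have hactv : ¬ (∃ a b : ℤ, a < b ∧ v a = b ∧ min i (v i) < b ∧ b < max i (v i)) := by
      rintro ⟨a, b, hab, hvab, hb1, hb2⟩
      rw [hvi] at hb1 hb2
      have hvb : v b = a := by rw [← hvab, hvv]
      by_cases hbn : b = n
      · rw [hbn, hvn] at hvb; omega
      by_cases hbm : b = m
      · rw [hbm, hvm] at hvb
        exact hacty ⟨n, m, by omega, hyn, by omega, by omega⟩
      by_cases hbq : b = q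
      · exact hacty ⟨p, q, by omega, hyp, by omega, by omega⟩
      by_cases hbp : b = p
      · rw [hbp, hvp] at hvb
        have hmp2 : m < p := by omega
        have hmn : m < n := by rcases hcases with h | h <;> omega
        have hnn : ¬ (min i (y i) < n ∧ n < max i (y i)) := fun hh =>
          hacty ⟨m, n, by omega, hym, hh.1, hh.2⟩
        have hqq : ¬ (min i (y i) < q ∧ q < max i (y i)) := fun hh =>
          hacty ⟨p, q, by omega, hyp, hh.1, hh.2⟩
        have hyine2 : y i ≠ i := hyf i
        rcases le_or_gt i (y i) with hcmp | hcmp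
        · have h5 := hK hmn i (by omega) (by omega)
          omega
        · have h5 := hK hmn (y i) (by omega) (by omega)
          rw [hyy] at h5
          omega
      · have hvbo : v b = y b := hvo b hbn hbm hbp hbq
        rw [hvbo] at hvb
        have hyab : y a = b := by rw [← hvb, hyy]
        exact hacty ⟨a, b, hab, hyab, hb1, hb2⟩
    rw [Imap, if_neg hactv]
  · -- part (b)
    intro j hj hjq1 d hd
    simp only [VisDes] at hd
    have hstep : (∃ a b : ℤ, a < b ∧ v a = b ∧ min (d+1) (v (d+1)) < b ∧
        b < max (d+1) (v (d+1))) ∧ v (d + 1) < d + 1 := by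
      have h5 : Imap v (d + 1) ≤ d := le_trans hd (min_le_left _ _)
      by_cases hact : (∃ a b : ℤ, a < b ∧ v a = b ∧ min (d+1) (v (d+1)) < b ∧
          b < max (d+1) (v (d+1)))
      · rw [Imap, if_pos hact] at h5
        exact ⟨hact, by omega⟩
      · rw [Imap, if_neg hact] at h5
        omega
    have hEy : ∀ e : ℤ, (∃ a b : ℤ, a < b ∧ y a = b ∧ min e (y e) < b ∧
        b < max e (y e)) → y e < e → j < e := by
      intro e hacte hyee
      set Ey := {x : ℤ | (∃ a b : ℤ, a < b ∧ y a = b ∧ min x (y x) < b ∧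
        b < max x (y x)) ∧ y x < x} with hEydef
      have hEsub : Ey ⊆ {x : ℤ | y x ≠ Theta x} := by
        rintro x ⟨⟨a, b, hab, hyab, hb1, hb2⟩, hx⟩
        intro hTh
        have h7 : y x = x - 1 ∨ y x = x + 1 := by
          rw [hTh, Theta_apply]; exact theta_bounds x
        omega
      have hEfin : Ey.Finite := hy.2.2.subset hEsub
      have hne : Ey.Nonempty := ⟨e, hacte, hyee⟩
      obtain ⟨e₀, he₀mem, hminle⟩ := hEfin.toFinset.exists_min_image (fun x => x)
        (by rwa [Set.Finite.toFinset_nonempty])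
      rw [Set.Finite.mem_toFinset] at he₀mem
      obtain ⟨hact₀, htop₀⟩ := he₀mem
      have hminle' : ∀ x ∈ Ey, e₀ ≤ x := fun x hx =>
        hminle x (hEfin.mem_toFinset.mpr hx)
      have hvd : VisDes (Imap y) (e₀ - 1) := by
        simp only [VisDes]
        have he' : e₀ - 1 + 1 = e₀ := by omega
        rw [he']
        have hIe : Imap y e₀ = y e₀ := by rw [Imap, if_pos hact₀]
        rw [hIe]
        apply le_min (by omega)
        by_cases hact1 : (∃ a b : ℤ, a < b ∧ y a = b ∧ min (e₀-1) (y (e₀-1)) < b ∧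
            b < max (e₀-1) (y (e₀-1)))
        · rw [Imap, if_pos hact1]
          by_contra hlt
          push_neg at hlt
          have h8 : e₀ - 1 ∈ Ey := ⟨hact1, by omega⟩
          have := hminle' _ h8
          omega
        · rw [Imap, if_neg hact1]; omega
      have hjle : j ≤ e₀ - 1 := hj.2 hvd
      have := hminle' e ⟨hacte, hyee⟩
      omega
    obtain ⟨⟨a, b, hab, hvab, hb1, hb2⟩, hvd1⟩ := hstep
    by_cases heq : q ≤ d + 1
    · omega
    push_neg at heq
    have hvb : v b = a := by rw [← hvab, hvv]
    by_cases hen : d + 1 = n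
    · rw [hen, hvn] at hvd1; omega
    by_cases hep : d + 1 = p
    · have hmp2 : m < p := by rw [hep, hvp] at hvd1; omega
      have hmn : m < n := by rcases hcases with h | h <;> omega
      rw [hep, hvp] at hb1 hb2
      have hbn : b ≠ n := by intro h; rw [h, hvn] at hvb; omega
      have hbm : b ≠ m := by intro h; rw [h, hvm] at hvb; omega
      have hbp : b ≠ p := by omega
      have hbq : b ≠ q := by omega
      have hvbo : v b = y b := hvo b hbn hbm hbp hbq
      rw [hvbo] at hvb
      have hyab : y a = b := by rw [← hvb, hyy]
      rcases lt_or_gt_of_ne hbn with hblt | hbgt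
      · have h5 := hEy n ⟨a, b, hab, hyab, by rw [hyn]; omega, by rw [hyn]; omega⟩
          (by rw [hyn]; omega)
        omega
      · have h6 := hK hmn b (by omega) (by omega)
        rw [hvb] at h6
        have h5 := hEy b ⟨m, n, by omega, hym, by rw [hvb]; omega, by rw [hvb]; omega⟩
          (by rw [hvb]; omega)
        omega
    by_cases hem : d + 1 = m
    · have hpm : p < m := by rw [hem, hvm] at hvd1; omega
      have hmq2 : m < q := by rcases hcases with h | h <;> omega
      rw [hem, hvm] at hb1 hb2
      have hvbo : v b = y b := hvo b (by omega) (by omega) (by omega) (by omega)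
      rw [hvbo] at hvb
      have hyab : y a = b := by rw [← hvb, hyy]
      have h5 := hEy m ⟨a, b, hab, hyab, by rw [hym]; omega, by rw [hym]; omega⟩
        (by rw [hym]; omega)
      omega
    have heqq : d + 1 ≠ q := by omega
    have hvoe : v (d+1) = y (d+1) := hvo _ hen hem hep heqq
    rw [hvoe] at hvd1 hb1 hb2
    by_cases hbn : b = n
    · rw [hbn, hvn] at hvb; omega
    by_cases hbq : b = q
    · rw [hbq] at hb2; omega
    by_cases hbm : b = m
    · rw [hbm, hvm] at hvb
      have hnm : n < m := by omega
      rw [hbm] at hb1 hb2 hab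
      have h5 := hEy (d+1) ⟨n, m, by omega, hyn, hb1, hb2⟩ hvd1
      omega
    by_cases hbp : b = p
    · have hmp2 : m < p := by rw [hbp, hvp] at hvb; omega
      have hmn : m < n := by rcases hcases with h | h <;> omega
      rw [hbp] at hb1 hb2
      by_cases hacte : (∃ a' b' : ℤ, a' < b' ∧ y a' = b' ∧
          min (d+1) (y (d+1)) < b' ∧ b' < max (d+1) (y (d+1)))
      · have h5 := hEy (d+1) hacte (by omega)
        omega
      · exfalso
        have hnn : ¬ (min (d+1) (y (d+1)) < n ∧ n < max (d+1) (y (d+1))) := fun hh =>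
          hacte ⟨m, n, by omega, hym, hh.1, hh.2⟩
        have hyn2 : y (d+1) ≠ n := by
          intro h; apply hem; rw [← hyy (d+1), h]
        have h6 := hK hmn (y (d+1)) (by omega) (by omega)
        rw [hyy] at h6
        omega
    · have hvbo : v b = y b := hvo b hbn hbm hbp hbq
      rw [hvbo] at hvb
      have hyab : y a = b := by rw [← hvb, hyy]
      have h5 := hEy (d+1) ⟨a, b, hab, hyab, hb1, hb2⟩ (by omega)
      omega
end
end

section
/- Let z ∈ F_ℤ be not FPF-Grassmannian, let (q,r) be the lexicographically maximal FPF-visible inversion of z, and let y = η_FPF(z) = (q,r) z (q,r). Then: (a) the maximal visible descent of I(z) is q or q+1; (b) every visible descent of I(y) is at most q; (c) I(y) and I(z) have the same minimal visible descent, and it is at most q − 1. -/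
open Equiv

noncomputable section

/-- `f` is the involution `(φ₀, n+1)(φ₁, n+2)⋯(φ_{r-1}, n+r)` of `ℤ`, where
`φ₀ < φ₁ < ⋯ < φ_{r-1} ≤ n` and `r ≥ 1`. -/
def IsIGrassWith (f : ℤ → ℤ) (n : ℤ) (r : ℕ) (φ : ℕ → ℤ) : Prop :=
  1 ≤ r ∧
  (∀ i j : ℕ, i < j → j < r → φ i < φ j) ∧
  (∀ i : ℕ, i < r → φ i ≤ n) ∧
  (∀ i : ℕ, i < r → f (φ i) = n + (i : ℤ) + 1 ∧ f (n + (i : ℤ) + 1) = φ i) ∧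
  (∀ x : ℤ, (∀ i : ℕ, i < r → x ≠ φ i ∧ x ≠ n + (i : ℤ) + 1) → f x = x)

/-- `f` is I-Grassmannian: the identity, or `(φ₁, n+1)⋯(φ_r, n+r)` as above. -/
def IsIGrassFn (f : ℤ → ℤ) : Prop := f = id ∨ ∃ n r φ, IsIGrassWith f n r φ

/-- `z ∈ F_ℤ` is FPF-Grassmannian if `I(z)` is I-Grassmannian. -/
def IsFPFGrass (z : Equiv.Perm ℤ) : Prop := IsIGrassFn (Imap z)

/-!
Call `b` a top of an involution `v` of `ℤ` if `v b < b`. `I(z)` keeps exactly the cycles of `z`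
whose span strictly contains a top of `z`, and the least visible descent of an involution is its
least top minus one.

Maximality of `(q,r)` rules out FPF-visible inversions `(a,b)` of `z` with `a > q`. This kills
every visible descent of `I(z)` beyond `q + 1` and makes exactly one of `q`, `q + 1` a visible
descent. The conjugate `y` has no such inversions either, and since `y q = z r < q`, the point `q`
is a top of `y` that also kills the descent `q + 1` of `I(y)`.

An involution of `ℤ` with a single visible descent `n` is I-Grassmannian: its tops form an
interval `(n, M]` on which it increases. Hence a non-FPF-Grassmannian `z` has a top of `I(z)` at
most `q`. Conjugation by `(q,r)` changes neither the tops below `q` nor their spans, and keeps `q`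
a top of `I`, so `I(y)` and `I(z)` have the same least top.
-/

open Function

def CoversEnd (z : Equiv.Perm ℤ) (i : ℤ) : Prop :=
  ∃ a b : ℤ, a < b ∧ z a = b ∧ min i (z i) < b ∧ b < max i (z i)

section Imap

variable {z : Equiv.Perm ℤ}

theorem imap_apply_of_coversEnd {i : ℤ} (h : CoversEnd z i) : Imap z i = z i :=
  if_pos h

theorem imap_apply_of_not_coversEnd {i : ℤ} (h : ¬ CoversEnd z i) : Imap z i = i :=
  if_neg h

theorem coversEnd_iff (hz : Involutive z) {i : ℤ} :
    CoversEnd z i ↔ ∃ b, z b < b ∧ min i (z i) < b ∧ b < max i (z i) :=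
  ⟨fun ⟨a, b, hab, hb, h⟩ => ⟨b, by subst hb; rwa [hz], h⟩,
    fun ⟨b, hb, h⟩ => ⟨z b, b, hb, hz b, h⟩⟩

theorem coversEnd_apply (hz : Involutive z) {i : ℤ} : CoversEnd z (z i) ↔ CoversEnd z i := by
  unfold CoversEnd
  rw [hz i, min_comm, max_comm]

theorem imap_involutive (hz : Involutive z) : Involutive (Imap z) := by
  intro i
  by_cases h : CoversEnd z i
  · rw [imap_apply_of_coversEnd h, imap_apply_of_coversEnd ((coversEnd_apply hz).2 h), hz]
  · rw [imap_apply_of_not_coversEnd h, imap_apply_of_not_coversEnd h]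

theorem imap_apply_lt_iff {b : ℤ} : Imap z b < b ↔ z b < b ∧ CoversEnd z b := by
  by_cases h : CoversEnd z b
  · simp [imap_apply_of_coversEnd h, h]
  · simp [imap_apply_of_not_coversEnd h, h]

theorem imap_tops_subset (hz : Involutive z) : {b | Imap z b < b} ⊆ {i | z i ≠ Theta i} := by
  intro b hb he
  obtain ⟨hlt, hcov⟩ := imap_apply_lt_iff.1 hb
  obtain ⟨c, -, hc⟩ := (coversEnd_iff hz).1 hcov
  change z b = thetaFun b at he
  unfold thetaFun at he
  split_ifs at he <;> omega

theorem visDes_imap_iff (hz : Involutive z) (i : ℤ) :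
    VisDes (Imap z) i ↔
      z (i + 1) < i ∧ CoversEnd z (i + 1) ∧ (CoversEnd z i → z (i + 1) < z i) := by
  constructor
  · intro hd
    have hcov : CoversEnd z (i + 1) := by
      by_contra hc
      have := hd.trans (min_le_left _ _)
      rw [imap_apply_of_not_coversEnd hc] at this
      omega
    unfold VisDes at hd
    rw [imap_apply_of_coversEnd hcov, le_min_iff] at hd
    have hlt : z (i + 1) < i := by
      refine hd.1.lt_of_ne fun h => ?_
      obtain ⟨b, -, hb⟩ := (coversEnd_iff hz).1 hcov
      omega
    refine ⟨hlt, hcov, fun hc => ?_⟩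
    rw [imap_apply_of_coversEnd hc] at hd
    exact hd.2.lt_of_ne (z.injective.ne (by omega))
  · rintro ⟨hlt, hcov, hi⟩
    unfold VisDes
    rw [imap_apply_of_coversEnd hcov, le_min_iff]
    by_cases hc : CoversEnd z i
    · rw [imap_apply_of_coversEnd hc]
      exact ⟨hlt.le, (hi hc).le⟩
    · rw [imap_apply_of_not_coversEnd hc]
      exact ⟨hlt.le, hlt.le⟩

theorem coversEnd_of_agree_below {w w' : Equiv.Perm ℤ} (hw : Involutive w) (hw' : Involutive w')
    {b : ℤ} (hb : w b < b) (hcov : CoversEnd w b) (hle : w' b ≤ w b)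
    (hagree : ∀ x < b, w x < x → w' x = w x) : CoversEnd w' b := by
  obtain ⟨t, ht, hbt, htb⟩ := (coversEnd_iff hw).1 hcov
  have := hagree t (by omega) ht
  exact (coversEnd_iff hw').2 ⟨t, by omega, by omega, by omega⟩

end Imap

theorem isLeast_visDes_of_isLeast {v : ℤ → ℤ} {β : ℤ} (h : IsLeast {b | v b < b} β) :
    IsLeast {i | VisDes v i} (β - 1) := by
  obtain ⟨hβ, hmin⟩ := h
  have hpred : ¬ v (β - 1) < β - 1 := fun hc => by have := hmin hc; omega
  refine ⟨?_, fun i (hi : v (i + 1) ≤ min i (v i)) => ?_⟩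
  · change v (β - 1 + 1) ≤ min (β - 1) (v (β - 1))
    rw [sub_add_cancel]
    change v β < β at hβ
    omega
  · have := @hmin (i + 1) (by change v (i + 1) < i + 1; omega)
    omega

section UniqueVisDes

variable {v : ℤ → ℤ} {n M : ℤ}

theorem apply_lt_iff_of_unique_visDes {β : ℤ} (hmin : IsLeast {b | v b < b} β)
    (hmax : IsGreatest {b | v b < b} M) (huniq : ∀ i, VisDes v i → i = n) (b : ℤ) :
    v b < b ↔ n < b ∧ b ≤ M := by
  have hβ : β = n + 1 := by
    have := huniq _ (isLeast_visDes_of_isLeast hmin).1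
    omega
  refine ⟨fun hb => ⟨by have := hmin.2 hb; omega, hmax.2 hb⟩, fun h => ?_⟩
  obtain ⟨hnb, hbM⟩ := h
  induction b, hbM using Int.leInductionDown with
  | base => exact hmax.1
  | pred b hbM ih =>
    have hb : v b < b := ih (by omega)
    by_contra hc
    have : VisDes v (b - 1) := by
      change v (b - 1 + 1) ≤ min (b - 1) (v (b - 1))
      rw [sub_add_cancel]
      omega
    have := huniq _ this
    omega

theorem apply_le_of_tops_eq_Ioc (hv : Involutive v) (hT : ∀ b, v b < b ↔ n < b ∧ b ≤ M)
    {b : ℤ} (hb : n < b ∧ b ≤ M) : v b ≤ n := by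
  have hlt := (hT b).2 hb
  have := (hT (v b)).not.1 (by rw [hv]; omega)
  omega

theorem apply_lt_apply_succ_of_unique_visDes (hv : Involutive v)
    (hT : ∀ b, v b < b ↔ n < b ∧ b ≤ M) (huniq : ∀ i, VisDes v i → i = n)
    {b : ℤ} (hnb : n < b) (hbM : b < M) : v b < v (b + 1) := by
  have hne : v (b + 1) ≠ v b := hv.injective.ne (by omega)
  have hle := apply_le_of_tops_eq_Ioc hv hT (b := b + 1) ⟨by omega, by omega⟩
  by_contra hc
  have : VisDes v b := le_min (by omega) (by omega)
  have := huniq b this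
  omega

theorem isIGrassWith_of_tops_eq_Ioc (hv : Involutive v) (hT : ∀ b, v b < b ↔ n < b ∧ b ≤ M)
    (hnM : n < M) (hmono : ∀ b, n < b → b < M → v b < v (b + 1)) :
    IsIGrassWith v n (M - n).toNat (fun k => v (n + k + 1)) := by
  have hsmono : StrictMonoOn v (Set.Ioc n M) :=
    strictMonoOn_of_lt_succ Set.ordConnected_Ioc fun b _ hb hb' => by
      rw [Order.succ_eq_add_one] at hb' ⊢
      exact hmono b hb.1 (by have := hb'.2; omega)
  refine ⟨by omega, fun i j hij hj => ?_, fun i hi => ?_, fun i _ => ⟨hv _, rfl⟩, fun x hx => ?_⟩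
  · exact hsmono ⟨by omega, by omega⟩ ⟨by omega, by omega⟩ (by omega)
  · exact apply_le_of_tops_eq_Ioc hv hT ⟨by omega, by omega⟩
  · rcases lt_trichotomy (v x) x with h | h | h
    · have := (hT x).1 h
      have := (hx (x - n - 1).toNat (by omega)).2
      omega
    · exact h
    · have hvx := (hT (v x)).1 (by rw [hv]; exact h)
      refine ((hx (v x - n - 1).toNat (by omega)).1 ?_).elim
      change x = v (n + ((v x - n - 1).toNat : ℤ) + 1)
      rw [show n + ((v x - n - 1).toNat : ℤ) + 1 = v x by omega, hv]

theorem isIGrassFn_of_unique_visDes (hv : Involutive v) (hfin : {b | v b < b}.Finite)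
    (hn : VisDes v n) (huniq : ∀ i, VisDes v i → i = n) : IsIGrassFn v := by
  have hne : {b | v b < b}.Nonempty := ⟨n + 1, show v (n + 1) < n + 1 by
    have : v (n + 1) ≤ n := hn.trans (min_le_left _ _)
    omega⟩
  obtain ⟨β, hβ, hβmin⟩ := Set.exists_min_image _ id hfin hne
  obtain ⟨M, hM, hMmax⟩ := Set.exists_max_image _ id hfin hne
  have hT := apply_lt_iff_of_unique_visDes ⟨hβ, hβmin⟩ ⟨hM, hMmax⟩ huniq
  have hnM : n < M := ((hT M).1 hM).1
  exact Or.inr ⟨n, _, _, isIGrassWith_of_tops_eq_Ioc hv hT hnM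
    fun _ hnb hbM => apply_lt_apply_succ_of_unique_visDes hv hT huniq hnb hbM⟩

end UniqueVisDes

section VisDesImap

variable {w : Equiv.Perm ℤ}

theorem not_coversEnd_of_visDes_imap (hw : Involutive w) {i : ℤ} (hd : VisDes (Imap w) i)
    (hi : ¬ FpfVisInv w i (i + 1)) :
    w i < w (i + 1) ∧ w (i + 1) < i ∧ ¬ CoversEnd w i := by
  obtain ⟨hlt, -, hcov⟩ := (visDes_imap_iff hw i).1 hd
  have hne : w i ≠ w (i + 1) := w.injective.ne (by omega)
  have hle : w i ≤ w (i + 1) := by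
    by_contra hc
    exact hi ⟨by omega, by omega⟩
  exact ⟨hle.lt_of_ne hne, hlt, fun hc => by have := hcov hc; omega⟩

/-- `i - 1` lies in the span of `i`, which covers no top, so `w (i - 1) > i`; then `(i - 1, i)` or
`(i - 1, i + 1)` is an FPF-visible inversion. -/
theorem not_visDes_imap_of_forall_not_fpfVisInv (hw : Involutive w) (hfpf : ∀ i, w i ≠ i)
    {q : ℤ} (hq : ∀ a b, q < a → ¬ FpfVisInv w a b) {i : ℤ} (hi : q + 2 ≤ i) :
    ¬ VisDes (Imap w) i := by
  intro hd
  obtain ⟨hlt, hbelow, hnc⟩ := not_coversEnd_of_visDes_imap hw hd (hq i (i + 1) (by omega))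
  have hpred : i < w (i - 1) := by
    have h1 := hfpf (i - 1)
    have h2 : w (i - 1) ≠ i := fun h => by
      have := hw (i - 1)
      rw [h] at this
      omega
    have h3 : ¬ w (i - 1) < i - 1 := fun h =>
      hnc ((coversEnd_iff hw).2 ⟨i - 1, h, by omega, by omega⟩)
    omega
  rcases (by omega : w (i + 1) < i - 1 ∨ w (i + 1) = i - 1) with h | h
  · exact hq (i - 1) (i + 1) (by omega) ⟨by omega, by omega⟩
  · exact hq (i - 1) i (by omega) ⟨by omega, by omega⟩

end VisDesImap

namespace IsMaxVisInv

variable {z : Equiv.Perm ℤ} {q r : ℤ}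

theorem lt (hqr : IsMaxVisInv z q r) : q < r := hqr.1.1

theorem apply_right_lt (hqr : IsMaxVisInv z q r) : z r < q ∧ z r < z q :=
  lt_min_iff.1 hqr.1.2

theorem not_fpfVisInv_of_lt (hqr : IsMaxVisInv z q r) {a b : ℤ} (ha : q < a) :
    ¬ FpfVisInv z a b := fun h => by
  rcases hqr.2 a b h with h | h <;> omega

theorem not_fpfVisInv_left_of_lt (hqr : IsMaxVisInv z q r) {b : ℤ} (hb : r < b) :
    ¬ FpfVisInv z q b := fun h => by
  rcases hqr.2 q b h with h | h <;> omega

theorem apply_lt_apply_right (hqr : IsMaxVisInv z q r) {k : ℤ} (hqk : q < k) (hkr : k < r) :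
    z k < z r := by
  have hne : z k ≠ z r := z.injective.ne hkr.ne
  have := hqr.apply_right_lt
  by_contra hc
  exact hqr.not_fpfVisInv_of_lt hqk ⟨hkr, by omega⟩

theorem apply_succ_lt (hqr : IsMaxVisInv z q r) : z (q + 1) < q ∧ z (q + 1) < z q := by
  have := hqr.apply_right_lt
  rcases (by have := hqr.lt; omega : q + 1 = r ∨ q + 1 < r) with h | h
  · rw [h]
    exact this
  · have := hqr.apply_lt_apply_right (k := q + 1) (by omega) h
    omega

theorem apply_left_ne_right (hqr : IsMaxVisInv z q r) (hz : Involutive z) : z q ≠ r :=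
  fun e => by
    have := hz q
    rw [e] at this
    have := hqr.apply_right_lt
    omega

theorem lt_apply_left (hqr : IsMaxVisInv z q r) (hz : Involutive z) (h : q < z q) : r < z q := by
  have := hqr.apply_right_lt
  have := hqr.apply_left_ne_right hz
  by_contra hc
  exact hqr.not_fpfVisInv_of_lt (b := r) h ⟨by omega, by rw [hz]; omega⟩

theorem apply_left_lt_apply (hqr : IsMaxVisInv z q r) (hz : Involutive z) {b : ℤ} (hb : r < b)
    (hbq : b ≠ z q) (h : z b < r) : z q < z b := by
  have := hqr.apply_right_lt
  have hzb : z b ≠ q := fun e => hbq (by rw [← e, hz])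
  have hlt : z b < q := by
    by_contra! h'
    have := hqr.apply_lt_apply_right (lt_of_le_of_ne h' hzb.symm) h
    rw [hz] at this
    omega
  have hne : z b ≠ z q := z.injective.ne (by have := hqr.lt; omega)
  by_contra hc
  exact hqr.not_fpfVisInv_left_of_lt hb ⟨by have := hqr.lt; omega, by omega⟩

theorem visDes_imap_or (hqr : IsMaxVisInv z q r) (hz : Involutive z) (hfpf : ∀ i, z i ≠ i) :
    VisDes (Imap z) q ∨ VisDes (Imap z) (q + 1) := by
  obtain ⟨h1, h2⟩ := hqr.apply_succ_lt
  by_cases hc : CoversEnd z (q + 1)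
  · exact Or.inl ((visDes_imap_iff hz q).2 ⟨h1, hc, fun _ => h2⟩)
  right
  have hq : q < z q := by
    by_contra! h
    exact hc ((coversEnd_iff hz).2 ⟨q, h.lt_of_ne (hfpf q), by omega, by omega⟩)
  have hq2 : z (q + 2) ≤ q := by
    by_contra! h
    have h3 : z (q + 2) ≠ q + 1 := fun e => by rw [hz.eq_iff] at e; omega
    have h4 : z q ≠ q + 1 := fun e => by rw [hz.eq_iff] at e; omega
    have h5 : z q ≠ q + 2 := fun e => by rw [hz.eq_iff] at e; omega
    have h6 := hfpf (q + 2)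
    exact hqr.not_fpfVisInv_of_lt (a := q + 2) (b := z q) (by omega) ⟨by omega, by rw [hz]; omega⟩
  have h12 : z (q + 1) < z (q + 2) := by
    have hne : z (q + 1) ≠ z (q + 2) := z.injective.ne (by omega)
    by_contra hc'
    exact hqr.not_fpfVisInv_of_lt (a := q + 1) (b := q + 2) (by omega) ⟨by omega, by omega⟩
  have hcov : CoversEnd z (q + 2) := (coversEnd_iff hz).2 ⟨q + 1, by omega, by omega, by omega⟩
  rw [visDes_imap_iff hz, show q + 1 + 1 = q + 2 by ring]
  exact ⟨by omega, hcov, fun h => absurd h hc⟩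

theorem not_visDes_imap_and (hqr : IsMaxVisInv z q r) (hz : Involutive z) :
    ¬ (VisDes (Imap z) q ∧ VisDes (Imap z) (q + 1)) := by
  rintro ⟨h1, h2⟩
  rw [visDes_imap_iff hz] at h1 h2
  have := h2.2.2 h1.2.1
  exact hqr.not_fpfVisInv_of_lt (a := q + 1) (b := q + 1 + 1) (by omega) ⟨by omega, by omega⟩

theorem visDes_imap_le (hqr : IsMaxVisInv z q r) (hz : Involutive z) (hfpf : ∀ i, z i ≠ i)
    {i : ℤ} (hi : VisDes (Imap z) i) : i ≤ q + 1 := by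
  by_contra! h
  exact not_visDes_imap_of_forall_not_fpfVisInv hz hfpf (fun _ _ => hqr.not_fpfVisInv_of_lt)
    (by omega) hi

theorem exists_isGreatest_visDes_imap (hqr : IsMaxVisInv z q r) (hz : Involutive z)
    (hfpf : ∀ i, z i ≠ i) :
    ∃ d, IsGreatest {i | VisDes (Imap z) i} d ∧ (d = q ∨ d = q + 1) := by
  by_cases hd : VisDes (Imap z) (q + 1)
  · exact ⟨q + 1, ⟨hd, fun i => hqr.visDes_imap_le hz hfpf⟩, Or.inr rfl⟩
  refine ⟨q, ⟨(hqr.visDes_imap_or hz hfpf).resolve_right hd, fun i hi => ?_⟩, Or.inl rfl⟩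
  have := hqr.visDes_imap_le hz hfpf hi
  rcases (by omega : i ≤ q ∨ i = q + 1) with h | rfl
  exacts [h, absurd hi hd]

theorem exists_imap_apply_lt (hqr : IsMaxVisInv z q r) (hz : Involutive z) (hfpf : ∀ i, z i ≠ i)
    (hfin : {i | z i ≠ Theta i}.Finite) (hg : ¬ IsFPFGrass z) : ∃ b ≤ q, Imap z b < b := by
  by_contra! htop
  have hge : ∀ i, VisDes (Imap z) i → q ≤ i := fun i hi => by
    have : Imap z (i + 1) ≤ i := hi.trans (min_le_left _ _)
    by_contra! h
    have := htop (i + 1) (by omega)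
    omega
  have huniq : ∀ n i, VisDes (Imap z) n → VisDes (Imap z) i → i = n := by
    intro n i hn hi
    have := hge n hn
    have := hge i hi
    have := hqr.visDes_imap_le hz hfpf hn
    have := hqr.visDes_imap_le hz hfpf hi
    by_contra hne
    rcases (by omega : n = q ∧ i = q + 1 ∨ n = q + 1 ∧ i = q) with ⟨rfl, rfl⟩ | ⟨rfl, rfl⟩
    exacts [hqr.not_visDes_imap_and hz ⟨hn, hi⟩, hqr.not_visDes_imap_and hz ⟨hi, hn⟩]
  obtain ⟨n, hn⟩ : ∃ n, VisDes (Imap z) n := (hqr.visDes_imap_or hz hfpf).elim (⟨q, ·⟩) (⟨q + 1, ·⟩)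
  exact hg (isIGrassFn_of_unique_visDes (imap_involutive hz)
    ((hfin.subset (imap_tops_subset hz))) hn fun i hi => huniq n i hn hi)

end IsMaxVisInv

section Eta

variable {z y : Equiv.Perm ℤ} {q r : ℤ}

theorem involutive_of_eq_swap_mul_mul_swap (hz : Involutive z)
    (hy : y = swap q r * z * swap q r) : Involutive y := by
  intro i
  subst hy
  simp only [Perm.mul_apply, swap_apply_self, hz _]

theorem apply_ne_of_eq_swap_mul_mul_swap (hfpf : ∀ i, z i ≠ i)
    (hy : y = swap q r * z * swap q r) (i : ℤ) : y i ≠ i := fun h => by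
  subst hy
  apply hfpf (swap q r i)
  simpa using congrArg (swap q r) h

theorem eta_apply_of_ne (hz : Involutive z) (hy : y = swap q r * z * swap q r) {k : ℤ}
    (hkq : k ≠ q) (hkr : k ≠ r) (hkzq : k ≠ z q) (hkzr : k ≠ z r) : y k = z k := by
  have h1 : z k ≠ q := fun e => hkzq (by rw [← e, hz])
  have h2 : z k ≠ r := fun e => hkzr (by rw [← e, hz])
  rw [hy, Perm.mul_apply, Perm.mul_apply, swap_apply_of_ne_of_ne hkq hkr,
    swap_apply_of_ne_of_ne h1 h2]

namespace IsMaxVisInv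

theorem eta_apply_left (hqr : IsMaxVisInv z q r) (hy : y = swap q r * z * swap q r) :
    y q = z r := by
  have := hqr.apply_right_lt
  have := hqr.lt
  rw [hy, Perm.mul_apply, Perm.mul_apply, swap_apply_left,
    swap_apply_of_ne_of_ne (by omega) (by omega)]

theorem eta_apply_right (hqr : IsMaxVisInv z q r) (hz : Involutive z) (hfpf : ∀ i, z i ≠ i)
    (hy : y = swap q r * z * swap q r) : y r = z q := by
  rw [hy, Perm.mul_apply, Perm.mul_apply, swap_apply_right,
    swap_apply_of_ne_of_ne (hfpf q) (hqr.apply_left_ne_right hz)]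

theorem eta_apply_apply_left (hqr : IsMaxVisInv z q r) (hz : Involutive z) (hfpf : ∀ i, z i ≠ i)
    (hy : y = swap q r * z * swap q r) : y (z q) = r := by
  rw [hy, Perm.mul_apply, Perm.mul_apply, swap_apply_of_ne_of_ne (hfpf q)
    (hqr.apply_left_ne_right hz), hz, swap_apply_left]

theorem eta_apply_apply_right (hqr : IsMaxVisInv z q r) (hz : Involutive z)
    (hy : y = swap q r * z * swap q r) : y (z r) = q := by
  have := hqr.apply_right_lt
  have := hqr.lt
  rw [hy, Perm.mul_apply, Perm.mul_apply, swap_apply_of_ne_of_ne (x := z r) (by omega) (by omega),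
    hz, swap_apply_right]

theorem eta_not_fpfVisInv (hqr : IsMaxVisInv z q r) (hz : Involutive z) (hfpf : ∀ i, z i ≠ i)
    (hy : y = swap q r * z * swap q r) {a b : ℤ} (ha : q < a) : ¬ FpfVisInv y a b := by
  rintro ⟨hab, H⟩
  have := hqr.apply_right_lt
  have := hqr.lt
  have hzq : z q < q ∨ r < z q := (hfpf q).lt_or_gt.imp_right (hqr.lt_apply_left hz)
  have hgen : ∀ k, q < k → k ≠ r → k ≠ z q → y k = z k := fun k hk hkr hkzq =>
    eta_apply_of_ne hz hy (by omega) hkr hkzq (by omega)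
  by_cases hbr : b = r
  · subst hbr
    rw [hqr.eta_apply_right hz hfpf hy, hgen a ha (by omega) (by omega)] at H
    exact hqr.not_fpfVisInv_of_lt ha ⟨hab, by omega⟩
  by_cases hbq : b = z q
  · subst hbq
    rw [hqr.eta_apply_apply_left hz hfpf hy, hgen a ha (by omega) (by omega)] at H
    exact hqr.not_fpfVisInv_of_lt ha ⟨hab, by rw [hz]; omega⟩
  rw [hgen b (by omega) hbr hbq] at H
  by_cases har : a = r ∨ a = z q
  · have hya : min a (y a) = min r (z q) := by
      rcases har with rfl | rfl
      · rw [hqr.eta_apply_right hz hfpf hy]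
      · rw [hqr.eta_apply_apply_left hz hfpf hy, min_comm]
    rw [hya] at H
    have := hqr.apply_left_lt_apply hz (b := b) (by omega) hbq (by omega)
    omega
  · obtain ⟨har, hazq⟩ := not_or.1 har
    rw [hgen a ha har hazq] at H
    exact hqr.not_fpfVisInv_of_lt ha ⟨hab, H⟩

theorem eta_visDes_imap_le (hqr : IsMaxVisInv z q r) (hz : Involutive z) (hfpf : ∀ i, z i ≠ i)
    (hy : y = swap q r * z * swap q r) {d : ℤ} (hd : VisDes (Imap y) d) : d ≤ q := by
  have hy' := involutive_of_eq_swap_mul_mul_swap hz hy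
  have hno : ∀ a b, q < a → ¬ FpfVisInv y a b := fun _ _ => hqr.eta_not_fpfVisInv hz hfpf hy
  by_contra! h
  rcases (by omega : d = q + 1 ∨ q + 2 ≤ d) with rfl | h2
  · obtain ⟨hlt, hbelow, hnc⟩ := not_coversEnd_of_visDes_imap hy' hd (hno _ _ (by omega))
    have := hqr.apply_right_lt
    exact hnc ((coversEnd_iff hy').2
      ⟨q, by rw [hqr.eta_apply_left hy]; omega, by omega, by omega⟩)
  · exact not_visDes_imap_of_forall_not_fpfVisInv hy' (apply_ne_of_eq_swap_mul_mul_swap hfpf hy)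
      hno h2 hd

theorem eta_apply_eq_of_lt (hqr : IsMaxVisInv z q r) (hz : Involutive z) (hfpf : ∀ i, z i ≠ i)
    (hy : y = swap q r * z * swap q r) {x : ℤ} (hx : x < q) (htop : z x < x ∨ y x < x) :
    y x = z x := by
  have := hqr.apply_right_lt
  have := hqr.lt
  refine eta_apply_of_ne hz hy (by omega) (by omega) (fun h => ?_) (fun h => ?_)
  · subst h
    rw [hz, hqr.eta_apply_apply_left hz hfpf hy] at htop
    omega
  · subst h
    rw [hz, hqr.eta_apply_apply_right hz hy] at htop
    omega

theorem imap_eta_apply_lt (hqr : IsMaxVisInv z q r) (hz : Involutive z) (hfpf : ∀ i, z i ≠ i)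
    (hy : y = swap q r * z * swap q r) {b : ℤ} (hbq : b ≤ q) (hb : Imap z b < b) :
    Imap y b < b := by
  obtain ⟨hlt, hcov⟩ := imap_apply_lt_iff.1 hb
  have hle : y b ≤ z b := by
    rcases hbq.lt_or_eq with h | h
    · exact (hqr.eta_apply_eq_of_lt hz hfpf hy h (Or.inl hlt)).le
    · rw [h, hqr.eta_apply_left hy]
      exact hqr.apply_right_lt.2.le
  refine imap_apply_lt_iff.2 ⟨by omega, coversEnd_of_agree_below hz
    (involutive_of_eq_swap_mul_mul_swap hz hy) hlt hcov hle fun x hx hzx => ?_⟩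
  exact hqr.eta_apply_eq_of_lt hz hfpf hy (by omega) (Or.inl hzx)

theorem imap_apply_lt_of_imap_eta (hqr : IsMaxVisInv z q r) (hz : Involutive z)
    (hfpf : ∀ i, z i ≠ i) (hy : y = swap q r * z * swap q r) {b : ℤ} (hbq : b < q)
    (hb : Imap y b < b) : Imap z b < b := by
  obtain ⟨hlt, hcov⟩ := imap_apply_lt_iff.1 hb
  have hyb := hqr.eta_apply_eq_of_lt hz hfpf hy hbq (Or.inr hlt)
  refine imap_apply_lt_iff.2 ⟨by omega, coversEnd_of_agree_below
    (involutive_of_eq_swap_mul_mul_swap hz hy) hz hlt hcov hyb.ge fun x hx hyx => ?_⟩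
  exact (hqr.eta_apply_eq_of_lt hz hfpf hy (by omega) (Or.inr hyx)).symm

end IsMaxVisInv

end Eta

/-- let `z ∈ F_ℤ` be not FPF-Grassmannian, let `(q,r)` be its
lexicographically maximal FPF-visible inversion, and let `y = η_FPF(z) = (q,r) z (q,r)`.
Then (a) the maximal visible descent of `I(z)` is `q` or `q+1`; (b) every visible descent
of `I(y)` is at most `q`; (c) `I(y)` and `I(z)` have the same minimal visible descent,
which is at most `q - 1`. -/
theorem visDes_Imap_eta (z : Equiv.Perm ℤ) (hz : z ∈ FZ) (hg : ¬ IsFPFGrass z)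
    (q r : ℤ) (hqr : IsMaxVisInv z q r)
    (y : Equiv.Perm ℤ) (hy : y = Equiv.swap q r * z * Equiv.swap q r) :
    (∃ d : ℤ, IsGreatest {i : ℤ | VisDes (Imap z) i} d ∧ (d = q ∨ d = q + 1)) ∧
    (∀ d : ℤ, VisDes (Imap y) d → d ≤ q) ∧
    (∃ j : ℤ, IsLeast {d : ℤ | VisDes (Imap y) d} j ∧
      IsLeast {d : ℤ | VisDes (Imap z) d} j ∧ j ≤ q - 1) := by
  obtain ⟨hzz, hfpf, hfin⟩ := hz
  have hinv : Involutive z := fun i => DFunLike.congr_fun hzz i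
  obtain ⟨b₀, hb₀q, hb₀⟩ := hqr.exists_imap_apply_lt hinv hfpf hfin hg
  obtain ⟨β, hβ, hβmin⟩ := Set.exists_min_image {b | Imap z b < b} id
    (hfin.subset (imap_tops_subset hinv)) ⟨b₀, hb₀⟩
  have hβq : β ≤ q := (hβmin b₀ hb₀).trans hb₀q
  have hyβ : IsLeast {b | Imap y b < b} β :=
    ⟨hqr.imap_eta_apply_lt hinv hfpf hy hβq hβ, fun x hx => le_of_not_gt fun hxβ =>
      (hβmin x (hqr.imap_apply_lt_of_imap_eta hinv hfpf hy (by omega) hx)).not_gt hxβ⟩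
  exact ⟨hqr.exists_isGreatest_visDes_imap hinv hfpf,
    fun _ => hqr.eta_visDes_imap_le hinv hfpf hy,
    β - 1, isLeast_visDes_of_isLeast hyβ, isLeast_visDes_of_isLeast ⟨hβ, hβmin⟩, by omega⟩
end
end

section
/- Let z ∈ F_ℤ and v ∈ T̂₁(z). Let (q,r) be the lexicographically maximal FPF-visible inversion of z, and let (q₁, r₁) be any FPF-visible inversion of v. Then q₁ < q or r₁ < r. Consequently, if n ≥ r − q, then the maximal FPF-visible descent of every element of T̂_n(z) is strictly less than q. -/
open Equiv

noncomputable section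

open Classical in
/-- `η_FPF(z) = (q,r) z (q,r)` where `(q,r)` is the lexicographically maximal FPF-visible
inversion of `z` (and `η_FPF(Θ) = Θ` by convention; `Θ` has no FPF-visible inversions). -/
def etaFPF (z : Equiv.Perm ℤ) : Equiv.Perm ℤ :=
  if h : ∃ p : ℤ × ℤ, IsMaxVisInv z p.1 p.2 then
    Equiv.swap h.choose.1 h.choose.2 * z * Equiv.swap h.choose.1 h.choose.2
  else z

open Classical in
/-- The maximal FPF-visible descent of `z` (junk value `0` if there is none). -/
def maxFpfVisDes (z : Equiv.Perm ℤ) : ℤ :=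
  if h : ∃ q : ℤ, IsGreatest {i : ℤ | FpfVisDes z i} q then h.choose else 0

open Classical in
/-- `T̂₁(z)`: the children of `z` in the FPF-involution Lascoux–Schützenberger tree. -/
def That1 (z : Equiv.Perm ℤ) : Set (Equiv.Perm ℤ) :=
  if IsFPFGrass z then ∅ else PsiMinus (etaFPF z) (etaFPF z (maxFpfVisDes z))

/-- `T̂_n(z)`: `T̂₀(z) = {z}` and `T̂_n(z) = ⋃_{v ∈ T̂_{n-1}(z)} T̂₁(v)`. -/
def That : ℕ → Equiv.Perm ℤ → Set (Equiv.Perm ℤ)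
  | 0, z => {z}
  | n + 1, z => ⋃ v ∈ That n z, That1 v


/-!
Write `η = (q r) z (q r)` and `p = z r`. A child of `z` is `v = (i p) η (i p)` with `i < p` and
`ℓ̂_FPF(v) = ℓ̂_FPF(η) + 1`. If `z i > q`, the cycles `(i q)` and `(p, z i)` of `v` cross, and
uncrossing them, which gives back `η`, creates at least two FPF inversions: `(i p)` carries the FPF
inversions of `v` to FPF inversions of `η`, apart from four explicit families that can be rerouted,
and `(i, p)`, `(q, z i)` are new. As both lengths count an even number of pairs, this contradicts
`ℓ̂_FPF(v) > ℓ̂_FPF(η)`. So `z i < q`, and `v` then differs from `z` only on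
`{i, z i, p, q, r, z q}`, in such a way that a visible inversion `(a, b)` of `v` with `q ≤ a`, other
than `(q, b)` with `b < r`, would give a visible inversion of `z` lexicographically beyond `(q, r)`.

Iterating, the visible inversions of the elements of `T̂_n(z)` are lexicographically below
`(q, r - n)`; every node with children has a visible inversion, since an element of `F_ℤ` without
one is FPF-Grassmannian. A visible descent `d` is the visible inversion `(d, d + 1)`, hence `d < q`
once `n ≥ r - q`.
-/

/-- `Inv_FPF(w) = Inv(w) ∖ Cyc_ℤ(w)`. -/
def fpfInvSet (w : Perm ℤ) : Set (ℤ × ℤ) := InvSet w \ CycSet w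

lemma fpfLen_eq (w : Perm ℤ) : fpfLen w = (fpfInvSet w).ncard / 2 := rfl

lemma mem_fpfInvSet {w : Perm ℤ} {c d : ℤ} :
    (c, d) ∈ fpfInvSet w ↔ c < d ∧ w d < w c ∧ w c ≠ d := by
  simp only [fpfInvSet, InvSet, CycSet, Set.mem_sdiff, Set.mem_ofPred_eq, not_and]
  exact ⟨fun ⟨⟨h1, h2⟩, h3⟩ => ⟨h1, h2, h3 h1⟩, fun ⟨h1, h2, h3⟩ => ⟨⟨h1, h2⟩, fun _ => h3⟩⟩

lemma thetaFun_eq_sub_one_or_add_one (m : ℤ) : thetaFun m = m - 1 ∨ thetaFun m = m + 1 := by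
  unfold thetaFun; split <;> simp

lemma thetaFun_eq_of_lt_of_lt {c d : ℤ} (hcd : c < d) (h : thetaFun d < thetaFun c) :
    thetaFun c = d := by
  rcases thetaFun_eq_sub_one_or_add_one c with hc | hc <;>
    rcases thetaFun_eq_sub_one_or_add_one d with hd | hd <;> omega

lemma swap_conj_apply {α : Type*} [DecidableEq α] (x : Perm α) (a b m : α) :
    (swap a b * x * swap a b) m = swap a b (x (swap a b m)) :=
  rfl

namespace FZ

variable {x : Perm ℤ}

lemma apply_apply (hx : x ∈ FZ) (m : ℤ) : x (x m) = m := by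
  simpa using congrArg (· m) hx.1

lemma apply_ne_self (hx : x ∈ FZ) (m : ℤ) : x m ≠ m := hx.2.1 m

lemma apply_eq_iff (hx : x ∈ FZ) {a b : ℤ} : x a = b ↔ a = x b := by
  constructor <;> rintro rfl <;> simp [apply_apply hx]

lemma swap_conj_mem (hx : x ∈ FZ) (a b : ℤ) : swap a b * x * swap a b ∈ FZ := by
  refine ⟨?_, fun m hm => ?_, ?_⟩
  · ext m; simp [apply_apply hx]
  · apply hx.2.1 (swap a b m)
    simpa [swap_apply_eq_iff] using hm
  · refine ((hx.2.2.union (Set.toFinite {a, b})).union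
      ((hx.2.2.image x).union (Set.toFinite {x a, x b}))).subset fun m hm => ?_
    by_contra hout
    simp only [Set.mem_union, Set.mem_image, Set.mem_ofPred_eq, Set.mem_insert_iff,
      Set.mem_singleton_iff, not_or, not_exists, not_and] at hout hm
    obtain ⟨⟨hθ, ha, hb⟩, -, hxa, hxb⟩ := hout
    apply hm
    have hxa' : x m ≠ a := fun h => hxa (by rw [← h, apply_apply hx])
    have hxb' : x m ≠ b := fun h => hxb (by rw [← h, apply_apply hx])
    rw [swap_conj_apply, swap_apply_of_ne_of_ne ha hb, ← not_not.mp hθ,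
      swap_apply_of_ne_of_ne hxa' hxb']

lemma finite_fpfInvSet (hx : x ∈ FZ) : (fpfInvSet x).Finite := by
  set S := {i : ℤ | x i ≠ Theta i}
  have hS : S.Finite := hx.2.2
  have hθ : ∀ m ∉ S, x m = thetaFun m := fun m hm => by simpa [S, Theta] using hm
  refine ((hS.prod hS).union
    ((hS.biUnion fun c _ => (Set.finite_singleton c).prod (Set.finite_Icc c (x c + 1))).union
    (hS.biUnion fun d _ => (Set.finite_Icc (x d - 1) d).prod (Set.finite_singleton d)))).subset ?_
  rintro ⟨c, d⟩ hcd
  obtain ⟨hlt, hinv, hcyc⟩ := mem_fpfInvSet.mp hcd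
  simp only [Set.mem_union, Set.mem_prod, Set.mem_iUnion, Set.mem_Icc, Set.mem_singleton_iff,
    exists_prop]
  by_cases hc : c ∈ S <;> by_cases hd : d ∈ S
  · exact Or.inl ⟨hc, hd⟩
  · have := hθ d hd; have := thetaFun_eq_sub_one_or_add_one d
    exact Or.inr (Or.inl ⟨c, hc, rfl, by omega, by omega⟩)
  · have := hθ c hc; have := thetaFun_eq_sub_one_or_add_one c
    exact Or.inr (Or.inr ⟨d, hd, ⟨by omega, by omega⟩, rfl⟩)
  · simp only [hθ c hc, hθ d hd] at hinv hcyc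
    exact absurd (thetaFun_eq_of_lt_of_lt hlt hinv) hcyc

-- `(c, d) ↦ (x d, x c)` is a fixed-point-free involution of `Inv_FPF(x)`, interchanging the pairs
-- with `c < x d` and those with `x d < c`.
lemma even_ncard_fpfInvSet (hx : x ∈ FZ) : Even (fpfInvSet x).ncard := by
  set e : ℤ × ℤ → ℤ × ℤ := fun t => (x t.2, x t.1)
  have he : Function.Involutive e := fun t => by simp [e, apply_apply hx]
  set A := {t ∈ fpfInvSet x | t.1 < x t.2}
  set B := {t ∈ fpfInvSet x | x t.2 < t.1}
  have hAB : e '' A = B := by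
    rw [he.image_eq_preimage_symm]
    ext ⟨c, d⟩
    simp only [A, B, e, Set.mem_preimage, Set.mem_ofPred_eq, mem_fpfInvSet, apply_apply hx]
    constructor <;> rintro ⟨⟨h1, h2, h3⟩, h4⟩ <;> refine ⟨⟨?_, ?_, ?_⟩, ?_⟩ <;> omega
  have hunion : fpfInvSet x = A ∪ B := by
    ext ⟨c, d⟩
    simp only [A, B, Set.mem_union, Set.mem_ofPred_eq]
    constructor
    · intro h
      have : x d ≠ c := fun h' => (mem_fpfInvSet.mp h).2.2 (by rw [← h', apply_apply hx])
      rcases lt_or_gt_of_ne this with h' | h'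
      exacts [Or.inr ⟨h, h'⟩, Or.inl ⟨h, h'⟩]
    · rintro (h | h) <;> exact h.1
  have hfin := finite_fpfInvSet hx
  rw [hunion, Set.ncard_union_eq (Set.disjoint_left.mpr fun t hA hB => lt_asymm hA.2 hB.2)
    (hfin.subset fun t h => h.1) (hfin.subset fun t h => h.1), ← hAB,
    Set.ncard_image_of_injective _ he.injective]
  exact ⟨_, rfl⟩

end FZ

section VisibleInversions

variable {x : Perm ℤ}

lemma FpfVisInv.mem_fpfInvSet (hx : x ∈ FZ) {a b : ℤ} (h : FpfVisInv x a b) :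
    (a, b) ∈ fpfInvSet x := by
  obtain ⟨hab, hv⟩ := h
  rw [lt_min_iff] at hv
  refine _root_.mem_fpfInvSet.mpr ⟨hab, hv.2, fun hc => ?_⟩
  rw [← hc, FZ.apply_apply hx] at hv
  exact lt_irrefl _ hv.1

lemma exists_isMaxVisInv (hx : x ∈ FZ) {a b : ℤ} (h : FpfVisInv x a b) :
    ∃ q r : ℤ, IsMaxVisInv x q r := by
  have hfin : {t : ℤ × ℤ | FpfVisInv x t.1 t.2}.Finite :=
    (FZ.finite_fpfInvSet hx).subset fun t ht => ht.mem_fpfInvSet hx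
  set V : Finset (ℤ ×ₗ ℤ) := hfin.toFinset.image toLex
  have hV : ∀ t : ℤ × ℤ, FpfVisInv x t.1 t.2 → toLex t ∈ V := fun t ht =>
    Finset.mem_image_of_mem _ (hfin.mem_toFinset.mpr ht)
  have hne : V.Nonempty := ⟨_, hV (a, b) h⟩
  obtain ⟨t, ht, hteq⟩ := Finset.mem_image.mp (V.max'_mem hne)
  refine ⟨t.1, t.2, hfin.mem_toFinset.mp ht, fun c d hcd => ?_⟩
  have hle : toLex (c, d) ≤ toLex t := hteq ▸ V.le_max' _ (hV (c, d) hcd)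
  rwa [Prod.Lex.le_iff] at hle

lemma forall_apply_eq_or_of_forall_not_fpfVisInv (hx : x ∈ FZ)
    (h : ∀ a b : ℤ, ¬ FpfVisInv x a b) (c : ℤ) : x c = c - 1 ∨ x c = c + 1 := by
  have hup : ∀ c, c < x c → x c = c + 1 := by
    intro c hc
    by_contra hne
    have h1 : x (c + 1) ≠ c := fun h1 => hne ((FZ.apply_eq_iff hx).mpr h1.symm)
    rcases lt_or_gt_of_ne h1 with hlt | hgt
    · exact h c (c + 1) ⟨by omega, lt_min_iff.mpr ⟨hlt, by omega⟩⟩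
    · have h2 := FZ.apply_ne_self hx (c + 1)
      exact h (c + 1) (x c) ⟨by omega, by rw [FZ.apply_apply hx, lt_min_iff]; omega⟩
  rcases lt_or_gt_of_ne (FZ.apply_ne_self hx c) with hlt | hgt
  · have := hup (x c) (by rwa [FZ.apply_apply hx])
    rw [FZ.apply_apply hx] at this
    omega
  · exact Or.inr (hup c hgt)

lemma isFPFGrass_of_forall_not_fpfVisInv (hx : x ∈ FZ) (h : ∀ a b : ℤ, ¬ FpfVisInv x a b) :
    IsFPFGrass x := by
  refine Or.inl (funext fun m => if_neg ?_)
  rintro ⟨a, b, -, -, h1, h2⟩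
  rw [min_lt_iff] at h1
  rw [lt_max_iff] at h2
  have := forall_apply_eq_or_of_forall_not_fpfVisInv hx h m
  omega

end VisibleInversions

namespace IsMaxVisInv

variable {z : Perm ℤ} {q r : ℤ}

lemma unique {q' r' : ℤ} (h : IsMaxVisInv z q r) (h' : IsMaxVisInv z q' r') :
    q' = q ∧ r' = r := by
  have := h.2 q' r' h'.1
  have := h'.2 q r h.1
  omega

-- If `z(q+1) < z(r)` then `(q, q+1)` is visible directly; otherwise `(q+1, r)` would be a visible
-- inversion beyond `(q, r)`.
lemma isGreatest_fpfVisDes (h : IsMaxVisInv z q r) : IsGreatest {i | FpfVisDes z i} q := by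
  obtain ⟨⟨hqr, hvr⟩, hmax⟩ := h
  rw [lt_min_iff] at hvr
  refine ⟨⟨by omega, lt_min_iff.mpr ?_⟩, fun d hd => by have := hmax d (d + 1) hd; omega⟩
  rcases eq_or_lt_of_le (show q + 1 ≤ r by omega) with hr | hr
  · rwa [hr]
  · have hne : z (q + 1) ≠ z r := fun hc => by have := z.injective hc; omega
    by_contra! hge
    have := hmax (q + 1) r ⟨hr, lt_min_iff.mpr ⟨by omega, by omega⟩⟩
    omega

lemma etaFPF_eq (h : IsMaxVisInv z q r) : etaFPF z = swap q r * z * swap q r := by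
  have hex : ∃ t : ℤ × ℤ, IsMaxVisInv z t.1 t.2 := ⟨(q, r), h⟩
  obtain ⟨h1, h2⟩ := h.unique hex.choose_spec
  rw [etaFPF, dif_pos hex, h1, h2]

lemma maxFpfVisDes_eq (h : IsMaxVisInv z q r) : maxFpfVisDes z = q := by
  have hex : ∃ d, IsGreatest {i | FpfVisDes z i} d := ⟨q, h.isGreatest_fpfVisDes⟩
  rw [maxFpfVisDes, dif_pos hex]
  exact hex.choose_spec.unique h.isGreatest_fpfVisDes

lemma etaFPF_apply_maxFpfVisDes (h : IsMaxVisInv z q r) :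
    etaFPF z (maxFpfVisDes z) = z r := by
  obtain ⟨hqr, hvr⟩ := h.1
  rw [lt_min_iff] at hvr
  rw [h.maxFpfVisDes_eq, h.etaFPF_eq, swap_conj_apply, swap_apply_left,
    swap_apply_of_ne_of_ne (by omega) (by omega)]

end IsMaxVisInv

section SortedImage

def sortedImage (σ : Perm ℤ) (t : ℤ × ℤ) : ℤ × ℤ :=
  if σ t.1 ≤ σ t.2 then (σ t.1, σ t.2) else (σ t.2, σ t.1)

variable {σ : Perm ℤ} {c d : ℤ}

lemma sortedImage_of_lt (h : σ c < σ d) : sortedImage σ (c, d) = (σ c, σ d) :=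
  if_pos h.le

lemma sortedImage_of_gt (h : σ d < σ c) : sortedImage σ (c, d) = (σ d, σ c) :=
  if_neg (not_le.mpr h)

lemma sortedImage_sortedImage (hσ : Function.Involutive σ) (h : c < d) :
    sortedImage σ (sortedImage σ (c, d)) = (c, d) := by
  rcases lt_or_gt_of_ne (σ.injective.ne h.ne) with h' | h'
  · rw [sortedImage_of_lt h', sortedImage_of_lt (by rwa [hσ, hσ]), hσ, hσ]
  · rw [sortedImage_of_gt h', sortedImage_of_gt (by rwa [hσ, hσ]), hσ, hσ]

lemma mem_fpfInvSet_conj_sortedImage {y : Perm ℤ} (hy : y ∈ FZ) (hσ : Function.Involutive σ)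
    (hcd : c ≠ d) : sortedImage σ (c, d) ∈ fpfInvSet (σ * y * σ) ↔
      (σ c < σ d ↔ σ (y d) < σ (y c)) ∧ y c ≠ d := by
  have hconj : ∀ m, (σ * y * σ) (σ m) = σ (y m) := fun m => by simp [hσ m]
  have hne : σ (y c) ≠ σ (y d) := fun e => hcd (y.injective (σ.injective e))
  have hcyc : y d ≠ c ↔ y c ≠ d := by rw [ne_eq, ne_eq, FZ.apply_eq_iff hy, eq_comm]
  rcases lt_or_gt_of_ne (σ.injective.ne hcd) with h | h
  · rw [sortedImage_of_lt h, mem_fpfInvSet, hconj, hconj, σ.injective.ne_iff]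
    simp only [h, true_iff, true_and]
  · rw [sortedImage_of_gt h, mem_fpfInvSet, hconj, hconj, σ.injective.ne_iff, hcyc]
    simp only [h, not_lt_of_gt h, false_iff, not_lt, hne.le_iff_lt, true_and]

lemma swap_lt_swap_iff {i p u v : ℤ} (hip : i < p) (huv : u < v) :
    swap i p u < swap i p v ↔ ¬ (u = i ∧ v ≤ p ∨ i ≤ u ∧ v = p) := by
  simp only [swap_apply_def]
  split_ifs <;> omega

end SortedImage

section Uncrossing

variable {x : Perm ℤ} {i p a b : ℤ}

lemma swap_conj_apply_of_crossing (hx : x ∈ FZ) (hip : i < p) (hpa : p < a) (hab : a < b)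
    (hxi : x i = a) (hxp : x p = b) (u : ℤ) :
    (swap i p * x * swap i p) u =
      if u = i then b else if u = p then a else if u = a then p else if u = b then i else x u := by
  have hai : x u = i ↔ u = a := by rw [FZ.apply_eq_iff hx, hxi]
  have hbp : x u = p ↔ u = b := by rw [FZ.apply_eq_iff hx, hxp]
  rw [swap_conj_apply]
  by_cases hui : u = i
  · simp [hui, hxp, swap_apply_of_ne_of_ne (by omega : b ≠ i) (by omega : b ≠ p)]
  by_cases hup : u = p
  · simp [hup, hxi, hip.ne', swap_apply_of_ne_of_ne (by omega : a ≠ i) (by omega : a ≠ p)]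
  rw [swap_apply_of_ne_of_ne hui hup]
  simp only [swap_apply_def, hai, hbp, hui, hup, if_false]

/-- The four kinds of pairs `(c, d)` of `Inv_FPF(x)` whose images under `(i p)` are not FPF
inversions of `(i p) x (i p)`. -/
def IsUncrossException (x : Perm ℤ) (i p a b c d : ℤ) : Prop :=
  (c = i ∧ d < p ∧ x d < a) ∨ (d = p ∧ i < c ∧ b < x c) ∨
    (d = a ∧ c ≠ i ∧ c ≠ p ∧ i < x c ∧ x c < p) ∨ (c = b ∧ i < x d ∧ x d < p)

lemma sortedImage_mem_or_isUncrossException (hx : x ∈ FZ) (hip : i < p) (hpa : p < a)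
    (hab : a < b) (hxi : x i = a) (hxp : x p = b) {c d : ℤ} (hcd : (c, d) ∈ fpfInvSet x) :
    sortedImage (swap i p) (c, d) ∈ fpfInvSet (swap i p * x * swap i p) ∨
      IsUncrossException x i p a b c d := by
  obtain ⟨hlt, hinv, hcyc⟩ := mem_fpfInvSet.mp hcd
  rw [mem_fpfInvSet_conj_sortedImage hx (swap_apply_self i p) hlt.ne,
    swap_lt_swap_iff hip hlt, swap_lt_swap_iff hip hinv]
  have hci : c = i → x c = a := fun h => h ▸ hxi
  have hcp : c = p → x c = b := fun h => h ▸ hxp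
  have hdp : d = p → x d = b := fun h => h ▸ hxp
  have hxc : x c = p → c = b := fun h => ((FZ.apply_eq_iff hx).mp h).trans hxp
  have hxd : x d = i → d = a := fun h => ((FZ.apply_eq_iff hx).mp h).trans hxi
  unfold IsUncrossException
  by_cases hF1 : c = i ∧ d ≤ p ∨ i ≤ c ∧ d = p <;>
    by_cases hF2 : x d = i ∧ x c ≤ p ∨ i ≤ x d ∧ x c = p
  · exact Or.inl ⟨by simp only [hF1, hF2], hcyc⟩
  · rcases hF1 with ⟨hc, hd⟩ | ⟨hc, hd⟩
    · exact Or.inr (Or.inl ⟨hc, by omega, by omega⟩)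
    · exact Or.inr (Or.inr (Or.inl ⟨hd, by omega, by omega⟩))
  · rcases hF2 with ⟨hd, hc⟩ | ⟨hd, hc⟩
    · exact Or.inr (Or.inr (Or.inr (Or.inl ⟨hxd hd, by omega, by omega, by omega, by omega⟩)))
    · exact Or.inr (Or.inr (Or.inr (Or.inr ⟨hxc hc, by omega, by omega⟩)))
  · exact Or.inl ⟨by simp only [hF1, hF2], hcyc⟩

def uncrossRepair (a b : ℤ) (t : ℤ × ℤ) : ℤ × ℤ :=
  if t.2 = a then (t.1, b) else if t.1 = b then (a, t.2) else t

lemma uncrossRepair_mem (hx : x ∈ FZ) (hip : i < p) (hpa : p < a) (hab : a < b)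
    (hxi : x i = a) (hxp : x p = b) {c d : ℤ} (hlt : c < d)
    (he : IsUncrossException x i p a b c d) :
    uncrossRepair a b (c, d) ∈ fpfInvSet (swap i p * x * swap i p) \ {(i, p), (a, b)} := by
  have e := swap_conj_apply_of_crossing hx hip hpa hab hxi hxp
  rcases he with ⟨h0, h1, h2⟩ | ⟨h0, h1, h2⟩ | ⟨h0, h1, h2, h3, h4⟩ | ⟨h0, h1, h2⟩ <;>
    subst h0 <;> simp only [uncrossRepair] <;> split_ifs <;>
    simp only [Set.mem_sdiff, Set.mem_insert_iff, Set.mem_singleton_iff, mem_fpfInvSet, e,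
      Prod.mk.injEq] <;> split_ifs <;> omega

lemma sortedImage_uncrossRepair_not_mem (hx : x ∈ FZ) (hip : i < p) (hpa : p < a) (hab : a < b)
    (hxi : x i = a) (hxp : x p = b) {c d : ℤ} (hlt : c < d)
    (he : IsUncrossException x i p a b c d) :
    sortedImage (swap i p) (uncrossRepair a b (c, d)) ∉ fpfInvSet x := by
  have hxa : x a = i := by rw [← hxi, FZ.apply_apply hx]
  have hxb : x b = p := by rw [← hxp, FZ.apply_apply hx]
  rcases he with ⟨h0, h1, h2⟩ | ⟨h0, h1, h2⟩ | ⟨h0, h1, h2, h3, h4⟩ | ⟨h0, h1, h2⟩ <;>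
    subst h0 <;> simp only [uncrossRepair] <;> split_ifs <;> try omega
  all_goals
    simp only [sortedImage, swap_apply_def]
    split_ifs <;> simp only [mem_fpfInvSet, hxi, hxp, hxa, hxb] <;> omega

lemma uncrossRepair_inj (hip : i < p) (hpa : p < a) (hab : a < b) {c d c' d' : ℤ}
    (he : IsUncrossException x i p a b c d) (he' : IsUncrossException x i p a b c' d')
    (hlt : c < d) (hlt' : c' < d') (h : uncrossRepair a b (c, d) = uncrossRepair a b (c', d')) :
    (c, d) = (c', d') := by
  unfold IsUncrossException at he he'
  simp only [uncrossRepair] at h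
  split_ifs at h <;> simp only [Prod.mk.injEq] at h ⊢ <;> omega

open Classical in
def uncrossMap (x : Perm ℤ) (i p a b : ℤ) (t : ℤ × ℤ) : ℤ × ℤ :=
  if sortedImage (swap i p) t ∈ fpfInvSet (swap i p * x * swap i p) then sortedImage (swap i p) t
  else uncrossRepair a b t

lemma mapsTo_uncrossMap (hx : x ∈ FZ) (hip : i < p) (hpa : p < a) (hab : a < b)
    (hxi : x i = a) (hxp : x p = b) :
    Set.MapsTo (uncrossMap x i p a b) (fpfInvSet x)
      (fpfInvSet (swap i p * x * swap i p) \ {(i, p), (a, b)}) := by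
  rintro ⟨c, d⟩ hcd
  have hlt := (mem_fpfInvSet.mp hcd).1
  unfold uncrossMap
  split_ifs with h
  · have hxa : x a = i := by rw [← hxi, FZ.apply_apply hx]
    have hxb : x b = p := by rw [← hxp, FZ.apply_apply hx]
    have hFip : sortedImage (swap i p) (i, p) = (i, p) := by
      rw [sortedImage_of_gt] <;> simp [hip]
    have hFab : sortedImage (swap i p) (a, b) = (a, b) := by
      rw [sortedImage_of_lt, swap_apply_of_ne_of_ne (x := a) (by omega) (by omega),
        swap_apply_of_ne_of_ne (x := b) (by omega) (by omega)]
      rwa [swap_apply_of_ne_of_ne (x := a) (by omega) (by omega),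
        swap_apply_of_ne_of_ne (x := b) (by omega) (by omega)]
    simp only [Set.mem_sdiff, Set.mem_insert_iff, Set.mem_singleton_iff, not_or]
    refine ⟨h, fun h' => ?_, fun h' => ?_⟩ <;>
      rw [← sortedImage_sortedImage (swap_apply_self i p) hlt, h'] at hcd
    · rw [hFip, mem_fpfInvSet, hxi, hxp] at hcd; omega
    · rw [hFab, mem_fpfInvSet, hxa, hxb] at hcd; omega
  · exact uncrossRepair_mem hx hip hpa hab hxi hxp hlt
      ((sortedImage_mem_or_isUncrossException hx hip hpa hab hxi hxp hcd).resolve_left h)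

lemma injOn_uncrossMap (hx : x ∈ FZ) (hip : i < p) (hpa : p < a) (hab : a < b)
    (hxi : x i = a) (hxp : x p = b) : Set.InjOn (uncrossMap x i p a b) (fpfInvSet x) := by
  have hF : ∀ {c d : ℤ}, c < d →
      sortedImage (swap i p) (sortedImage (swap i p) (c, d)) = (c, d) :=
    sortedImage_sortedImage (swap_apply_self i p)
  have hexc : ∀ {c d : ℤ}, (c, d) ∈ fpfInvSet x →
      sortedImage (swap i p) (c, d) ∉ fpfInvSet (swap i p * x * swap i p) →
      IsUncrossException x i p a b c d := fun hcd =>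
    (sortedImage_mem_or_isUncrossException hx hip hpa hab hxi hxp hcd).resolve_left
  rintro ⟨c, d⟩ hcd ⟨c', d'⟩ hcd' heq
  have hlt := (mem_fpfInvSet.mp hcd).1
  have hlt' := (mem_fpfInvSet.mp hcd').1
  by_cases h : sortedImage (swap i p) (c, d) ∈ fpfInvSet (swap i p * x * swap i p) <;>
    by_cases h' : sortedImage (swap i p) (c', d') ∈ fpfInvSet (swap i p * x * swap i p) <;>
    simp only [uncrossMap, h, h', if_true, if_false] at heq
  · rw [← hF hlt, heq, hF hlt']
  · refine absurd ?_ (sortedImage_uncrossRepair_not_mem hx hip hpa hab hxi hxp hlt' (hexc hcd' h'))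
    rwa [← heq, hF hlt]
  · refine absurd ?_ (sortedImage_uncrossRepair_not_mem hx hip hpa hab hxi hxp hlt (hexc hcd h))
    rwa [heq, hF hlt']
  · exact uncrossRepair_inj hip hpa hab (hexc hcd h) (hexc hcd' h') hlt hlt' heq

lemma ncard_fpfInvSet_add_two_le_swap_conj (hx : x ∈ FZ) (hip : i < p) (hpa : p < a)
    (hab : a < b) (hxi : x i = a) (hxp : x p = b) :
    (fpfInvSet x).ncard + 2 ≤ (fpfInvSet (swap i p * x * swap i p)).ncard := by
  set D' := fpfInvSet (swap i p * x * swap i p)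
  have hD' : D'.Finite := FZ.finite_fpfInvSet (FZ.swap_conj_mem hx i p)
  have hpair : {(i, p), (a, b)} ⊆ D' := by
    have e := swap_conj_apply_of_crossing hx hip hpa hab hxi hxp
    refine Set.insert_subset_iff.mpr ⟨?_, Set.singleton_subset_iff.mpr ?_⟩ <;>
      rw [mem_fpfInvSet, e, e] <;> split_ifs <;> omega
  calc (fpfInvSet x).ncard + 2
      = (uncrossMap x i p a b '' fpfInvSet x).ncard + ({(i, p), (a, b)} : Set _).ncard := by
        rw [(injOn_uncrossMap hx hip hpa hab hxi hxp).ncard_image,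
          Set.ncard_pair (by simp only [ne_eq, Prod.mk.injEq]; omega)]
    _ ≤ (D' \ {(i, p), (a, b)}).ncard + ({(i, p), (a, b)} : Set _).ncard := by
        gcongr
        exacts [hD'.sdiff, (mapsTo_uncrossMap hx hip hpa hab hxi hxp).image_subset]
    _ = D'.ncard := Set.ncard_sdiff_add_ncard_of_subset hpair hD'

end Uncrossing

section Core

variable {z : Perm ℤ} {q r i : ℤ}

lemma swap_conj_swap_conj_apply_of_ge (hz : z ∈ FZ) (hqr : IsMaxVisInv z q r) (hi : i < z r)
    (hiq : z i < q) (u : ℤ) (hu : q ≤ u) :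
    (swap i (z r) * (swap q r * z * swap q r) * swap i (z r)) u =
      if u = q then i else if u = r then z q else if u = z q then r else z u := by
  obtain ⟨hlt, hv⟩ := hqr.1
  rw [lt_min_iff] at hv
  have hzz := FZ.apply_apply hz
  have hzq : z q ≠ q := FZ.apply_ne_self hz q
  have hzqr : z q ≠ r := fun h => by rw [← h, hzz] at hv; omega
  have hsu : swap i (z r) u = u := swap_apply_of_ne_of_ne (by omega) (by omega)
  have hp : swap q r (z r) = z r := swap_apply_of_ne_of_ne (by omega) (by omega)
  have hw : swap q r (z q) = z q := swap_apply_of_ne_of_ne hzq hzqr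
  have hw' : swap i (z r) (z q) = z q := swap_apply_of_ne_of_ne (by omega) (by omega)
  have hr : swap i (z r) r = r := swap_apply_of_ne_of_ne (by omega) (by omega)
  rw [swap_conj_apply, hsu, swap_conj_apply]
  by_cases huq : u = q
  · rw [if_pos huq, huq, swap_apply_left, hp, swap_apply_right]
  by_cases hur : u = r
  · rw [if_neg huq, if_pos hur, hur, swap_apply_right, hw, hw']
  rw [if_neg huq, if_neg hur, swap_apply_of_ne_of_ne huq hur]
  by_cases huw : u = z q
  · rw [if_pos huw, huw, hzz, swap_apply_left, hr]
  have hzu : z u ≠ q := fun h => huw (by rw [← h, hzz])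
  have hzur : z u ≠ r := fun h => by rw [← h, hzz] at hv; omega
  have hzui : z u ≠ i := fun h => by rw [← h, hzz] at hiq; omega
  have hzup : z u ≠ z r := fun h => hur (z.injective h)
  rw [if_neg huw, swap_apply_of_ne_of_ne hzu hzur, swap_apply_of_ne_of_ne hzui hzup]

lemma lt_or_eq_and_lt_of_fpfVisInv_swap_conj_swap_conj (hz : z ∈ FZ) (hqr : IsMaxVisInv z q r)
    (hi : i < z r) (hiq : z i < q) {a b : ℤ}
    (h : FpfVisInv (swap i (z r) * (swap q r * z * swap q r) * swap i (z r)) a b) :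
    a < q ∨ (a = q ∧ b < r) := by
  obtain ⟨hab, hv⟩ := h
  rw [lt_min_iff] at hv
  by_contra! hcon
  obtain ⟨hlt, hvr⟩ := hqr.1
  rw [lt_min_iff] at hvr
  have hmax : ∀ c d, c < d → z d < c → z d < z c → c < q ∨ (c = q ∧ d ≤ r) :=
    fun c d h1 h2 h3 => hqr.2 c d ⟨h1, lt_min_iff.mpr ⟨h2, h3⟩⟩
  have e := swap_conj_swap_conj_apply_of_ge hz hqr hi hiq
  rw [e a hcon.1, e b (by omega)] at hv
  have hzz := FZ.apply_apply hz
  have hzb : z b = q → b = z q := (FZ.apply_eq_iff hz).mp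
  have hza : a = z q → z a = q := fun h => h ▸ hzz q
  have m1 := hmax q b
  have m2 := hmax a r
  have m3 := hmax a (z q)
  have m4 := hmax (z b) r
  have m5 := hmax a b
  rw [hzz] at m3 m4
  split_ifs at hv <;> omega

end Core

section Tree

variable {z w : Perm ℤ} {q r : ℤ}

lemma apply_lt_of_fpfLen_swap_conj (hw : w ∈ FZ) (hqr : IsMaxVisInv w q r) {i : ℤ}
    (hi : i < w r) (hlen : fpfLen (swap i (w r) * (swap q r * w * swap q r) * swap i (w r)) =
      fpfLen (swap q r * w * swap q r) + 1) :
    w i < q := by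
  set η := swap q r * w * swap q r
  set u := swap i (w r) * η * swap i (w r)
  obtain ⟨hlt, hv⟩ := hqr.1
  rw [lt_min_iff] at hv
  have hzz := FZ.apply_apply hw
  have hwiq : w i ≠ q := fun h => by rw [← h, hzz] at hv; omega
  have hwir : w i ≠ r := fun h => by rw [← h, hzz] at hi; omega
  by_contra! hge
  have hηp : η (w r) = q := by
    rw [swap_conj_apply, swap_apply_of_ne_of_ne (x := w r) (by omega) (by omega), hzz,
      swap_apply_right]
  have hηi : η i = w i := by
    rw [swap_conj_apply, swap_apply_of_ne_of_ne (x := i) (by omega) (by omega),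
      swap_apply_of_ne_of_ne hwiq hwir]
  have hui : u i = q := by
    rw [swap_conj_apply, swap_apply_left, hηp]
    exact swap_apply_of_ne_of_ne (by omega) (by omega)
  have hup : u (w r) = w i := by
    rw [swap_conj_apply, swap_apply_right, hηi]
    exact swap_apply_of_ne_of_ne (FZ.apply_ne_self hw i) (w.injective.ne (by omega))
  have hη : η ∈ FZ := FZ.swap_conj_mem hw q r
  have hu : u ∈ FZ := FZ.swap_conj_mem hη i (w r)
  have hcount := ncard_fpfInvSet_add_two_le_swap_conj hu hi hv.1 (by omega) hui hup
  have hback : swap i (w r) * u * swap i (w r) = η := by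
    simp only [u, mul_assoc, swap_mul_self, mul_one, swap_mul_self_mul]
  rw [hback] at hcount
  obtain ⟨m, hm⟩ := FZ.even_ncard_fpfInvSet hu
  obtain ⟨m', hm'⟩ := FZ.even_ncard_fpfInvSet hη
  rw [fpfLen_eq, fpfLen_eq] at hlen
  omega

lemma mem_FZ_of_mem_That1 {u : Perm ℤ} (hu : u ∈ That1 w) : u ∈ FZ := by
  unfold That1 at hu
  split_ifs at hu
  exacts [absurd hu (Set.notMem_empty u), hu.1]

lemma mem_FZ_of_mem_That (hz : z ∈ FZ) : ∀ (n : ℕ), ∀ u ∈ That n z, u ∈ FZ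
  | 0, _, rfl => hz
  | n + 1, u, hu => by
    simp only [That, Set.mem_iUnion, exists_prop] at hu
    obtain ⟨w, -, hu⟩ := hu
    exact mem_FZ_of_mem_That1 hu

lemma fpfVisInv_lex_lt_of_mem_That1 (hw : w ∈ FZ) (hqr : IsMaxVisInv w q r) {u : Perm ℤ}
    (hu : u ∈ That1 w) {a b : ℤ} (h : FpfVisInv u a b) : a < q ∨ (a = q ∧ b < r) := by
  unfold That1 at hu
  split_ifs at hu
  · exact absurd hu (Set.notMem_empty u)
  rw [hqr.etaFPF_apply_maxFpfVisDes, hqr.etaFPF_eq] at hu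
  obtain ⟨-, hlen, i, hi, rfl⟩ := hu
  exact lt_or_eq_and_lt_of_fpfVisInv_swap_conj_swap_conj hw hqr hi
    (apply_lt_of_fpfLen_swap_conj hw hqr hi hlen) h

lemma fpfVisInv_lex_le_sub_of_mem_That (hz : z ∈ FZ) (hqr : IsMaxVisInv z q r) :
    ∀ (n : ℕ), ∀ u ∈ That n z, ∀ a b, FpfVisInv u a b → a < q ∨ (a = q ∧ b + n ≤ r)
  | 0, _, rfl, a, b, h => by have := hqr.2 a b h; push_cast; omega
  | n + 1, u, hu, a, b, h => by
    simp only [That, Set.mem_iUnion, exists_prop] at hu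
    obtain ⟨w, hwn, hu⟩ := hu
    have hw := mem_FZ_of_mem_That hz n w hwn
    obtain ⟨a₀, b₀, h₀⟩ : ∃ a b, FpfVisInv w a b := by
      by_contra! hnone
      simp [That1, isFPFGrass_of_forall_not_fpfVisInv hw hnone] at hu
    obtain ⟨Q, R, hQR⟩ := exists_isMaxVisInv hw h₀
    have := fpfVisInv_lex_le_sub_of_mem_That hz hqr n w hwn Q R hQR.1
    have := fpfVisInv_lex_lt_of_mem_That1 hw hQR hu h
    push_cast
    omega

end Tree

/-- let `z ∈ F_ℤ`, `v ∈ T̂₁(z)`, let `(q,r)` be the lexicographically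
maximal FPF-visible inversion of `z`, and let `(q₁,r₁)` be any FPF-visible inversion of
`v`. Then `q₁ < q` or `r₁ < r`; consequently, for `n ≥ r - q` every FPF-visible descent of
every element of `T̂_n(z)` is strictly less than `q`. -/
theorem that_visInv_decreases (z : Equiv.Perm ℤ) (hz : z ∈ FZ)
    (v : Equiv.Perm ℤ) (hv : v ∈ That1 z)
    (q r : ℤ) (hqr : IsMaxVisInv z q r)
    (q₁ r₁ : ℤ) (h1 : FpfVisInv v q₁ r₁) :
    (q₁ < q ∨ r₁ < r) ∧
    (∀ n : ℕ, r - q ≤ (n : ℤ) → ∀ u ∈ That n z, ∀ d : ℤ, FpfVisDes u d → d < q) := by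
  refine ⟨?_, fun n hn u hu d hd => ?_⟩
  · have := fpfVisInv_lex_lt_of_mem_That1 hz hqr hv h1
    omega
  · have := fpfVisInv_lex_le_sub_of_mem_That hz hqr n u hu d (d + 1) hd
    omega
end
end

section
/- Let z ∈ F_∞ and let v, w ∈ A_FPF(z) with v <_A w. Then λ(v) < λ(w) strictly in the dominance order on partitions. -/
open Equiv

noncomputable section

/-- `S_∞`: permutations of `ℤ` whose support is a finite set of positive integers. -/
def SInf : Set (Equiv.Perm ℤ) := {w | {i : ℤ | w i ≠ i}.Finite ∧ ∀ i : ℤ, w i ≠ i → 0 < i}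

/-- The Coxeter length of `w ∈ S_∞`: the number of inversions. -/
def lenZ (w : Equiv.Perm ℤ) : ℕ := (InvSet w).ncard

/-- `F_∞`: the elements of `F_ℤ` agreeing with `Θ` on all `i ≤ 0`. -/
def FInf : Set (Equiv.Perm ℤ) := {z | z ∈ FZ ∧ ∀ i : ℤ, i ≤ 0 → z i = Theta i}

/-- `A_FPF(z)`: the elements `w ∈ S_∞` of minimal Coxeter length with `z = w⁻¹ Θ w`. -/
def AFPF (z : Equiv.Perm ℤ) : Set (Equiv.Perm ℤ) :=
  {w | w ∈ SInf ∧ z = w⁻¹ * Theta * w ∧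
    ∀ v ∈ SInf, z = v⁻¹ * Theta * v → lenZ w ≤ lenZ v}

/-- `w = β_min(z)`: `w ∈ A_FPF(z)` and the one-line sequence `(w(1), w(2), …)` of `w`
is lexicographically minimal among elements of `A_FPF(z)`. -/
def IsLexMinAtom (z w : Equiv.Perm ℤ) : Prop :=
  w ∈ AFPF z ∧ ∀ v ∈ AFPF z, v = w ∨
    ∃ k : ℤ, 0 < k ∧ w k < v k ∧ ∀ j : ℤ, 0 < j → j < k → w j = v j

/-- `s_i = (i, i+1)` as a permutation of `ℤ`. -/
def sZ (i : ℤ) : Equiv.Perm ℤ := Equiv.swap i (i + 1)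

/-- The covering relation generating `<_A`: `v ≺ w` when there is an odd positive integer
`i` with `ℓ(s_i v) > ℓ(v) > ℓ(s_{i+1} v) > ℓ(s_{i+2} s_{i+1} v)`,
`s_{i+2} s_{i+1} v = s_i s_{i+1} w`, and `ℓ(s_i s_{i+1} w) < ℓ(s_{i+1} w) < ℓ(w) < ℓ(s_i w)`. -/
def AtomRel (v w : Equiv.Perm ℤ) : Prop :=
  ∃ i : ℤ, 0 < i ∧ Odd i ∧
    lenZ v < lenZ (sZ i * v) ∧
    lenZ (sZ (i + 1) * v) < lenZ v ∧
    lenZ (sZ (i + 2) * (sZ (i + 1) * v)) < lenZ (sZ (i + 1) * v) ∧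
    sZ (i + 2) * (sZ (i + 1) * v) = sZ i * (sZ (i + 1) * w) ∧
    lenZ (sZ i * (sZ (i + 1) * w)) < lenZ (sZ (i + 1) * w) ∧
    lenZ (sZ (i + 1) * w) < lenZ w ∧
    lenZ w < lenZ (sZ i * w)

/-- The `i`-th entry of the code of `w`: `c_i = #{j > i : w(j) < w(i)}`. -/
def codeZ (w : Equiv.Perm ℤ) (i : ℤ) : ℕ := {j : ℤ | i < j ∧ w j < w i}.ncard

/-- The sum `λ(w)₁ + ⋯ + λ(w)_k` of the `k` largest parts of the shape `λ(w)` of `w`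
(the partition sorting the code of `w`): the largest sum of `k` code entries at distinct
positive positions. -/
def shapeSum (w : Equiv.Perm ℤ) (k : ℕ) : ℕ :=
  sSup {m : ℕ | ∃ S : Finset ℤ, S.card = k ∧ (∀ i ∈ S, 0 < i) ∧ m = ∑ i ∈ S, codeZ w i}

/-!
A covering step `v ≺ w` of `<_A` replaces a pattern `1342` in the one-line notation of `v`, at
positions `a < b < c < d` carrying the values `i, i+2, i+3, i+1`, by the pattern `3124`. On codes
this adds `2` at `a` and subtracts `1` at `b` and at `c`, and the lowered entries never exceed the
old entry at `a`. Such a transfer cannot decrease the sum of the `k` largest entries for any `k`,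
and it strictly increases that sum when `k` is the number of positions whose new entry is at least
the new entry at `a`. Dominance is transitive, which handles chains of covering steps.
-/

lemma Finset.sum_lt_sum_of_lt_threshold {α : Type*} [DecidableEq α] {f g : α → ℕ}
    {S K : Finset α} {a : α} {N : ℕ} (hcard : S.card = K.card) (ha : a ∈ K)
    (hK : ∀ p ∈ K, N ≤ g p) (hlt : ∀ p ∈ S, p ∉ K.erase a → f p < N)
    (hle : ∀ p ∈ K.erase a, f p ≤ g p) :
    ∑ p ∈ S, f p < ∑ p ∈ K, g p := by
  set T := S ∩ K.erase a
  have hTS : T ⊆ S := Finset.inter_subset_left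
  have hTK : T ⊆ K := Finset.inter_subset_right.trans (K.erase_subset a)
  have hT : T.card < K.card :=
    (Finset.card_le_card Finset.inter_subset_right).trans_lt (Finset.card_erase_lt_of_mem ha)
  have hne : (S \ T).Nonempty := by
    rw [← Finset.card_pos, Finset.card_sdiff_of_subset hTS]
    omega
  have hsmall : ∑ p ∈ S \ T, f p < (S \ T).card • N := by
    rw [← Finset.sum_const]
    refine Finset.sum_lt_sum_of_nonempty hne fun p hp => ?_
    obtain ⟨hpS, hpT⟩ := Finset.mem_sdiff.mp hp
    exact hlt p hpS fun hpK => hpT (Finset.mem_inter.mpr ⟨hpS, hpK⟩)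
  calc ∑ p ∈ S, f p = ∑ p ∈ S \ T, f p + ∑ p ∈ T, f p := (Finset.sum_sdiff hTS).symm
    _ < (K \ T).card • N + ∑ p ∈ T, g p := by
      rw [Finset.card_sdiff_of_subset hTK, ← hcard, ← Finset.card_sdiff_of_subset hTS]
      exact add_lt_add_of_lt_of_le hsmall
        (Finset.sum_le_sum fun p hp => hle p (Finset.mem_inter.mp hp).2)
    _ ≤ ∑ p ∈ K \ T, g p + ∑ p ∈ T, g p := by
      gcongr
      exact Finset.card_nsmul_le_sum _ _ _ fun p hp => hK p (Finset.mem_sdiff.mp hp).1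
    _ = ∑ p ∈ K, g p := Finset.sum_sdiff hTK

structure IsCodeShift (f g : ℤ → ℕ) (a b c : ℤ) : Prop where
  b_ne_c : b ≠ c
  apply_a : g a = f a + 2
  apply_b : f b = g b + 1
  apply_c : f c = g c + 1
  le_b : g b ≤ f a
  le_c : g c ≤ f a
  eq_of_ne : ∀ p, p ≠ a → p ≠ b → p ≠ c → f p = g p

namespace IsCodeShift

variable {f g : ℤ → ℕ} {a b c : ℤ}

lemma sum_add (h : IsCodeShift f g a b c) (S : Finset ℤ) :
    ∑ p ∈ S, f p + (if a ∈ S then 2 else 0) =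
      ∑ p ∈ S, g p + (if b ∈ S then 1 else 0) + (if c ∈ S then 1 else 0) := by
  have hpoint (p : ℤ) : f p + (if p = a then 2 else 0) =
      g p + (if p = b then 1 else 0) + (if p = c then 1 else 0) := by
    have := h.apply_a; have := h.apply_b; have := h.apply_c; have := h.b_ne_c
    have := h.eq_of_ne p
    split_ifs <;> subst_vars <;> omega
  simpa only [Finset.sum_add_distrib, Finset.sum_ite_eq'] using
    Finset.sum_congr rfl fun p (_ : p ∈ S) => hpoint p

lemma exists_sum_le (h : IsCodeShift f g a b c) (ha : 0 < a) (S : Finset ℤ)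
    (hS : ∀ p ∈ S, 0 < p) :
    ∃ T : Finset ℤ, T.card = S.card ∧ (∀ p ∈ T, 0 < p) ∧ ∑ p ∈ S, f p ≤ ∑ p ∈ T, g p := by
  have hsum := h.sum_add S
  by_cases hkeep : a ∈ S ∨ (b ∉ S ∧ c ∉ S)
  · refine ⟨S, rfl, hS, ?_⟩
    rcases hkeep with haS | ⟨hbS, hcS⟩
    · rw [if_pos haS] at hsum
      split_ifs at hsum <;> omega
    · rw [if_neg hbS, if_neg hcS] at hsum
      split_ifs at hsum <;> omega
  -- otherwise trade an entry `x ∈ {b, c}` of `S` for `a`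
  push Not at hkeep
  obtain ⟨haS, hbc⟩ := hkeep
  obtain ⟨x, hxS, hx⟩ : ∃ x ∈ S, g x ≤ f a := by
    by_cases hb : b ∈ S
    · exact ⟨b, hb, h.le_b⟩
    · exact ⟨c, hbc hb, h.le_c⟩
  have haS' : a ∉ S.erase x := fun h' => haS (Finset.mem_of_mem_erase h')
  refine ⟨insert a (S.erase x), ?_, ?_, ?_⟩
  · rw [Finset.card_insert_of_notMem haS', Finset.card_erase_add_one hxS]
  · simp only [Finset.mem_insert, Finset.mem_erase]
    rintro p (rfl | ⟨-, hp⟩)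
    exacts [ha, hS p hp]
  · rw [Finset.sum_insert haS']
    have := Finset.add_sum_erase S g hxS
    have := h.apply_a
    split_ifs at hsum <;> omega

lemma lt_apply_a_or_eq (h : IsCodeShift f g a b c) (p : ℤ) :
    f p < g a ∨ (p ≠ a ∧ g a ≤ g p ∧ f p = g p) := by
  have := h.apply_a; have := h.apply_b; have := h.apply_c; have := h.le_b; have := h.le_c
  have := h.eq_of_ne p
  by_cases hpa : p = a
  · subst hpa; omega
  by_cases hpb : p = b
  · subst hpb; omega
  by_cases hpc : p = c
  · subst hpc; omega
  omega

lemma exists_forall_sum_lt (h : IsCodeShift f g a b c) (ha : 0 < a)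
    (hg : {p | g p ≠ 0}.Finite) :
    ∃ K : Finset ℤ, (∀ p ∈ K, 0 < p) ∧
      ∀ S : Finset ℤ, S.card = K.card → (∀ p ∈ S, 0 < p) → ∑ p ∈ S, f p < ∑ p ∈ K, g p := by
  have hfin : {p | 0 < p ∧ g a ≤ g p}.Finite :=
    hg.subset fun p hp => by have := h.apply_a; have := hp.2; simp only [Set.mem_ofPred_eq]; omega
  have hK (p : ℤ) : p ∈ hfin.toFinset ↔ 0 < p ∧ g a ≤ g p := Set.Finite.mem_toFinset hfin
  refine ⟨hfin.toFinset, fun p hp => ((hK p).mp hp).1, fun S hcard hS => ?_⟩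
  refine Finset.sum_lt_sum_of_lt_threshold hcard ((hK a).mpr ⟨ha, le_rfl⟩)
    (fun p hp => ((hK p).mp hp).2) (fun p hpS hpK => ?_) (fun p hpK => ?_) <;>
    simp only [Finset.mem_erase, hK] at hpK
  · have := hS p hpS
    rcases h.lt_apply_a_or_eq p with hlt | ⟨hpa, hle, -⟩
    exacts [hlt, absurd ⟨hpa, this, hle⟩ hpK]
  · rcases h.lt_apply_a_or_eq p with hlt | ⟨-, -, heq⟩
    exacts [hlt.le.trans hpK.2.2, heq.le]

end IsCodeShift

lemma sZ_apply_lt_sZ_apply_iff (j m n : ℤ) :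
    sZ j m < sZ j n ↔ (m < n ∧ ¬(m = j ∧ n = j + 1)) ∨ (m = j + 1 ∧ n = j) := by
  simp only [sZ, Equiv.swap_apply_def]
  split_ifs <;> omega

lemma sZ_mul_sZ_mul (j : ℤ) (u : Equiv.Perm ℤ) : sZ j * (sZ j * u) = u := by
  rw [← mul_assoc, sZ, Equiv.swap_mul_self, one_mul]

section Length

variable {u : Equiv.Perm ℤ} {j x y : ℤ}

lemma InvSet_sZ_mul (hx : u x = j) (hy : u y = j + 1) (hxy : x < y) :
    InvSet (sZ j * u) = insert (x, y) (InvSet u) := by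
  have hpx (p : ℤ) : u p = j ↔ p = x := by rw [← hx, u.injective.eq_iff]
  have hpy (p : ℤ) : u p = j + 1 ↔ p = y := by rw [← hy, u.injective.eq_iff]
  ext ⟨p, q⟩
  simp only [InvSet, Set.mem_ofPred_eq, Set.mem_insert_iff, Prod.mk.injEq, Equiv.Perm.mul_apply,
    sZ_apply_lt_sZ_apply_iff, hpx, hpy]
  omega

lemma lenZ_le_lenZ_sZ_mul (hx : u x = j) (hy : u y = j + 1) (hxy : x < y) :
    lenZ u ≤ lenZ (sZ j * u) := by
  rw [lenZ, lenZ, InvSet_sZ_mul hx hy hxy]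
  exact Set.ncard_le_ncard_insert _ _

lemma lt_of_lenZ_lt (h : lenZ u < lenZ (sZ j * u)) (hx : u x = j) (hy : u y = j + 1) :
    x < y := by
  by_contra hyx
  have hyx : y < x := lt_of_le_of_ne (not_lt.mp hyx) (by rintro rfl; omega)
  have := lenZ_le_lenZ_sZ_mul (u := sZ j * u) (j := j)
    (by simp [sZ, hy]) (by simp [sZ, hx]) hyx
  rw [sZ_mul_sZ_mul] at this
  omega

lemma lt_of_lenZ_gt (h : lenZ (sZ j * u) < lenZ u) (hx : u x = j + 1) (hy : u y = j) :
    x < y := by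
  by_contra hyx
  have hyx : y < x := lt_of_le_of_ne (not_lt.mp hyx) (by rintro rfl; omega)
  have := lenZ_le_lenZ_sZ_mul hy hx hyx
  omega

end Length

lemma sZ_sZ_sZ_sZ_apply (i m : ℤ) : sZ (i + 1) (sZ i (sZ (i + 2) (sZ (i + 1) m))) =
    if m = i then i + 2 else if m = i + 1 then i + 3
      else if m = i + 2 then i else if m = i + 3 then i + 1 else m := by
  simp only [sZ, Equiv.swap_apply_def]
  split_ifs <;> omega

/-- In one-line notation, `v` has the pattern `1342` at the positions `a < b < c < d`, with the
values `i, i+2, i+3, i+1`, and `w` is `v` with this pattern replaced by `3124`. -/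
structure AtomMove (v w : Equiv.Perm ℤ) (i a b c d : ℤ) : Prop where
  lt_ab : a < b
  lt_bc : b < c
  lt_cd : c < d
  apply_cases : ∀ j, (j = a ∧ v j = i ∧ w j = i + 2) ∨ (j = b ∧ v j = i + 2 ∧ w j = i) ∨
    (j = c ∧ v j = i + 3 ∧ w j = i + 1) ∨ (j = d ∧ v j = i + 1 ∧ w j = i + 3) ∨
    (j ≠ a ∧ j ≠ b ∧ j ≠ c ∧ j ≠ d ∧ (v j < i ∨ i + 3 < v j) ∧ w j = v j)

lemma AtomRel.exists_atomMove {v w : Equiv.Perm ℤ} (h : AtomRel v w) :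
    ∃ i a b c d, 0 < i ∧ AtomMove v w i a b c d := by
  obtain ⟨i, hi, -, -, -, hcd, hvw, hab, -, hbc⟩ := h
  have hw (x : ℤ) : w x = sZ (i + 1) (sZ i (sZ (i + 2) (sZ (i + 1) (v x)))) := by
    rw [← sZ_mul_sZ_mul (i + 1) w, ← sZ_mul_sZ_mul i (sZ (i + 1) * w), ← hvw]
    rfl
  simp only [sZ_sZ_sZ_sZ_apply] at hw
  have hv (m : ℤ) : v (v⁻¹ m) = m := v.apply_symm_apply m
  have hinj (x m : ℤ) : x = v⁻¹ m ↔ v x = m := Equiv.Perm.eq_inv_iff_eq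
  refine ⟨i, v⁻¹ i, v⁻¹ (i + 2), v⁻¹ (i + 3), v⁻¹ (i + 1), hi, ⟨?_, ?_, ?_, fun j => ?_⟩⟩
  · refine lt_of_lenZ_gt (u := sZ (i + 1) * w) hab ?_ ?_ <;>
      simp only [Equiv.Perm.mul_apply, hw, hv, sZ, Equiv.swap_apply_def] <;> split_ifs <;> omega
  · refine lt_of_lenZ_lt hbc ?_ ?_ <;> simp only [hw, hv] <;> split_ifs <;> omega
  · refine lt_of_lenZ_gt (u := sZ (i + 1) * v) hcd ?_ ?_ <;>
      simp only [Equiv.Perm.mul_apply, hv, sZ, Equiv.swap_apply_def] <;> split_ifs <;> omega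
  · simp only [hw, ne_eq, hinj]
    split_ifs <;> omega

lemma AtomRel.finite_InvSet {v w : Equiv.Perm ℤ} (h : AtomRel v w) :
    (InvSet v).Finite ∧ (InvSet w).Finite := by
  obtain ⟨_, _, _, _, hv, _, _, _, hw, _⟩ := h
  exact ⟨Set.finite_of_ncard_pos (Nat.zero_lt_of_lt hv),
    Set.finite_of_ncard_pos (Nat.zero_lt_of_lt hw)⟩

section Code

variable {u : Equiv.Perm ℤ}

lemma finite_codeZ_set (hu : (InvSet u).Finite) (p : ℤ) : {j | p < j ∧ u j < u p}.Finite :=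
  hu.preimage (Prod.mk_right_injective p).injOn

lemma codeZ_le_lenZ (hu : (InvSet u).Finite) (p : ℤ) : codeZ u p ≤ lenZ u :=
  Set.ncard_le_ncard_of_injOn (Prod.mk p) (fun _ hj => hj) (Prod.mk_right_injective p).injOn hu

lemma finite_setOf_codeZ_ne_zero (hu : (InvSet u).Finite) : {p | codeZ u p ≠ 0}.Finite := by
  refine (hu.image Prod.fst).subset fun p hp => ?_
  obtain ⟨j, hj⟩ := Set.nonempty_of_ncard_ne_zero hp
  exact ⟨(p, j), hj, rfl⟩

end Code

namespace AtomMove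

variable {v w : Equiv.Perm ℤ} {i a b c d : ℤ}

lemma pos (h : AtomMove v w i a b c d) (hi : 0 < i) (hv : v ∈ SInf) : 0 < a := by
  by_contra ha
  have := h.apply_cases a
  have := hv.2 a
  omega

lemma mem_SInf (h : AtomMove v w i a b c d) (hi : 0 < i) (hv : v ∈ SInf) : w ∈ SInf := by
  refine ⟨(hv.1.union (Set.finite_Icc i (i + 3))).subset fun j hj => ?_, fun j hj => ?_⟩ <;>
    have := h.apply_cases j <;> have := hv.2 j
  · simp only [Set.mem_ofPred_eq, Set.mem_union, Set.mem_Icc] at hj ⊢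
    omega
  · omega

lemma apply_a (h : AtomMove v w i a b c d) : v a = i ∧ w a = i + 2 := by
  have := h.apply_cases a; have := h.lt_ab; have := h.lt_bc; have := h.lt_cd; omega

lemma apply_b (h : AtomMove v w i a b c d) : v b = i + 2 ∧ w b = i := by
  have := h.apply_cases b; have := h.lt_ab; have := h.lt_bc; have := h.lt_cd; omega

lemma apply_c (h : AtomMove v w i a b c d) : v c = i + 3 ∧ w c = i + 1 := by
  have := h.apply_cases c; have := h.lt_ab; have := h.lt_bc; have := h.lt_cd; omega

lemma apply_d (h : AtomMove v w i a b c d) : v d = i + 1 ∧ w d = i + 3 := by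
  have := h.apply_cases d; have := h.lt_ab; have := h.lt_bc; have := h.lt_cd; omega

lemma codeZ_a (h : AtomMove v w i a b c d) (hv : (InvSet v).Finite) :
    codeZ w a = codeZ v a + 2 := by
  have hset : {j | a < j ∧ w j < w a} = insert b (insert c {j | a < j ∧ v j < v a}) := by
    ext j
    have := h.apply_cases j; have := h.apply_a; have := h.lt_ab; have := h.lt_bc; have := h.lt_cd
    simp only [Set.mem_ofPred_eq, Set.mem_insert_iff]
    omega
  have := h.apply_a; have := h.apply_b; have := h.apply_c; have := h.lt_bc
  have hfin := finite_codeZ_set hv a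
  rw [codeZ, hset, Set.ncard_insert_of_notMem ?_ (hfin.insert c),
    Set.ncard_insert_of_notMem ?_ hfin, codeZ]
  all_goals simp only [Set.mem_ofPred_eq, Set.mem_insert_iff]; omega

lemma codeZ_b (h : AtomMove v w i a b c d) (hw : (InvSet w).Finite) :
    codeZ v b = codeZ w b + 1 := by
  have hset : {j | b < j ∧ v j < v b} = insert d {j | b < j ∧ w j < w b} := by
    ext j
    have := h.apply_cases j; have := h.apply_b; have := h.lt_ab; have := h.lt_bc; have := h.lt_cd
    simp only [Set.mem_ofPred_eq, Set.mem_insert_iff]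
    omega
  have := h.apply_b; have := h.apply_d
  rw [codeZ, hset, Set.ncard_insert_of_notMem ?_ (finite_codeZ_set hw b), codeZ]
  simp only [Set.mem_ofPred_eq]; omega

lemma codeZ_c (h : AtomMove v w i a b c d) (hw : (InvSet w).Finite) :
    codeZ v c = codeZ w c + 1 := by
  have hset : {j | c < j ∧ v j < v c} = insert d {j | c < j ∧ w j < w c} := by
    ext j
    have := h.apply_cases j; have := h.apply_c; have := h.lt_ab; have := h.lt_bc; have := h.lt_cd
    simp only [Set.mem_ofPred_eq, Set.mem_insert_iff]
    omega
  have := h.apply_c; have := h.apply_d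
  rw [codeZ, hset, Set.ncard_insert_of_notMem ?_ (finite_codeZ_set hw c), codeZ]
  simp only [Set.mem_ofPred_eq]; omega

lemma codeZ_b_le (h : AtomMove v w i a b c d) (hv : (InvSet v).Finite) :
    codeZ w b ≤ codeZ v a := by
  refine Set.ncard_le_ncard (fun j hj => ?_) (finite_codeZ_set hv a)
  have := h.apply_cases j; have := h.apply_a; have := h.apply_b; have := h.lt_ab
  simp only [Set.mem_ofPred_eq] at hj ⊢
  omega

lemma codeZ_c_le (h : AtomMove v w i a b c d) (hv : (InvSet v).Finite) :
    codeZ w c ≤ codeZ v a := by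
  refine Set.ncard_le_ncard (fun j hj => ?_) (finite_codeZ_set hv a)
  have := h.apply_cases j; have := h.apply_a; have := h.apply_c; have := h.lt_ab; have := h.lt_bc
  simp only [Set.mem_ofPred_eq] at hj ⊢
  omega

lemma codeZ_eq (h : AtomMove v w i a b c d) {p : ℤ} (hpa : p ≠ a) (hpb : p ≠ b) (hpc : p ≠ c) :
    codeZ v p = codeZ w p := by
  have := h.apply_cases p; have := h.lt_ab; have := h.lt_bc; have := h.lt_cd
  rw [codeZ, codeZ]
  congr 1
  ext j
  have := h.apply_cases j
  simp only [Set.mem_ofPred_eq]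
  omega

lemma isCodeShift (h : AtomMove v w i a b c d) (hv : (InvSet v).Finite)
    (hw : (InvSet w).Finite) : IsCodeShift (codeZ v) (codeZ w) a b c :=
  ⟨h.lt_bc.ne, h.codeZ_a hv, h.codeZ_b hw, h.codeZ_c hw, h.codeZ_b_le hv, h.codeZ_c_le hv,
    fun _ => h.codeZ_eq⟩

end AtomMove

section Shape

variable {u v w : Equiv.Perm ℤ}

lemma bddAbove_shapeSum_set (hu : (InvSet u).Finite) (k : ℕ) :
    BddAbove {m : ℕ | ∃ S : Finset ℤ, S.card = k ∧ (∀ i ∈ S, 0 < i) ∧ m = ∑ i ∈ S, codeZ u i} := by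
  refine ⟨k * lenZ u, ?_⟩
  rintro m ⟨S, rfl, -, rfl⟩
  simpa using Finset.sum_le_sum fun i (_ : i ∈ S) => codeZ_le_lenZ hu i

lemma exists_shapeSum_eq (hu : (InvSet u).Finite) (k : ℕ) :
    ∃ S : Finset ℤ, S.card = k ∧ (∀ i ∈ S, 0 < i) ∧ shapeSum u k = ∑ i ∈ S, codeZ u i := by
  refine Nat.sSup_mem ?_ (bddAbove_shapeSum_set hu k)
  exact ⟨_, Finset.Ioc 0 (k : ℤ), by simp, fun i hi => (Finset.mem_Ioc.mp hi).1, rfl⟩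

lemma sum_codeZ_le_shapeSum (hu : (InvSet u).Finite) {S : Finset ℤ} (hS : ∀ i ∈ S, 0 < i) :
    ∑ i ∈ S, codeZ u i ≤ shapeSum u S.card :=
  le_csSup (bddAbove_shapeSum_set hu S.card) ⟨S, rfl, hS, rfl⟩

/-- `λ(v) < λ(w)` in dominance order. -/
def ShapeLT (v w : Equiv.Perm ℤ) : Prop :=
  (∀ k, shapeSum v k ≤ shapeSum w k) ∧ ∃ k, shapeSum v k < shapeSum w k

lemma ShapeLT.trans (h₁ : ShapeLT u v) (h₂ : ShapeLT v w) : ShapeLT u w :=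
  ⟨fun k => (h₁.1 k).trans (h₂.1 k), h₁.2.imp fun k hk => hk.trans_le (h₂.1 k)⟩

lemma IsCodeShift.shapeLT {a b c : ℤ} (h : IsCodeShift (codeZ v) (codeZ w) a b c) (ha : 0 < a)
    (hv : (InvSet v).Finite) (hw : (InvSet w).Finite) : ShapeLT v w := by
  refine ⟨fun k => ?_, ?_⟩
  · obtain ⟨S, rfl, hS, hvS⟩ := exists_shapeSum_eq hv k
    obtain ⟨T, hT, hTpos, hle⟩ := h.exists_sum_le ha S hS
    rw [hvS, ← hT]
    exact hle.trans (sum_codeZ_le_shapeSum hw hTpos)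
  · obtain ⟨K, hKpos, hK⟩ := h.exists_forall_sum_lt ha (finite_setOf_codeZ_ne_zero hw)
    obtain ⟨S, hS, hSpos, hvS⟩ := exists_shapeSum_eq hv K.card
    exact ⟨K.card, hvS ▸ (hK S hS hSpos).trans_le (sum_codeZ_le_shapeSum hw hKpos)⟩

end Shape

section Atoms

variable {v w : Equiv.Perm ℤ}

lemma AtomRel.mem_SInf (h : AtomRel v w) (hv : v ∈ SInf) : w ∈ SInf := by
  obtain ⟨i, a, b, c, d, hi, hm⟩ := h.exists_atomMove
  exact hm.mem_SInf hi hv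

lemma AtomRel.shapeLT (h : AtomRel v w) (hv : v ∈ SInf) : ShapeLT v w := by
  obtain ⟨i, a, b, c, d, hi, hm⟩ := h.exists_atomMove
  obtain ⟨hfv, hfw⟩ := h.finite_InvSet
  exact (hm.isCodeShift hfv hfw).shapeLT (hm.pos hi hv) hfv hfw

lemma shapeLT_of_transGen_atomRel (hv : v ∈ SInf) (h : Relation.TransGen AtomRel v w) :
    ShapeLT v w := by
  suffices ShapeLT v w ∧ w ∈ SInf from this.1
  induction h with
  | single h => exact ⟨h.shapeLT hv, h.mem_SInf hv⟩
  | tail _ h ih => exact ⟨ih.1.trans (h.shapeLT ih.2), h.mem_SInf ih.2⟩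

end Atoms

theorem shape_lt_of_atomRel_general (z v w : Equiv.Perm ℤ)
    (hv : v ∈ AFPF z) (hvw : Relation.TransGen AtomRel v w) :
    (∀ k : ℕ, shapeSum v k ≤ shapeSum w k) ∧ (∃ k : ℕ, shapeSum v k < shapeSum w k) :=
  shapeLT_of_transGen_atomRel hv.1 hvw

/-- if `z ∈ F_∞` and `v, w ∈ A_FPF(z)` with `v <_A w`, then
`λ(v) < λ(w)` strictly in the dominance order (all partial sums of `λ(v)` are at most
those of `λ(w)`, with strict inequality somewhere). -/
theorem shape_lt_of_atomRel (z v w : Equiv.Perm ℤ) (hz : z ∈ FInf)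
    (hv : v ∈ AFPF z) (hw : w ∈ AFPF z) (hvw : Relation.TransGen AtomRel v w) :
    (∀ k : ℕ, shapeSum v k ≤ shapeSum w k) ∧ (∃ k : ℕ, shapeSum v k < shapeSum w k) :=
  shape_lt_of_atomRel_general z v w hv hvw
end
end
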